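/- arXiv:2308.14080 — 6 statements merged into one kernel-verified Lean document; each statement's English description precedes it below -/
import Mathlib

section
/- Let f be continuously differentiable, μ-strongly convex with L-Lipschitz gradient (0 < μ < L), and let {x_k}, {y_k} be generated by the NAG method with step size s ∈ (0, 1/L). Then for every k ≥ 1, f(x_k) - f* ≤ (∏_{i=0}^{k-1} ρ_i) · ‖x_0 - x*‖² / (2s(t_{k+1} - 1)t_{k+1}), where for each k ≥ 0 the number ρ_k := 1 - 1/min{C_k, D_k} lies in (0, 1). -/
open Filter Finset
open scoped RealInnerProductSpace Topology

variable {F : Type*} [NormedAddCommGroup F] [InnerProductSpace ℝ F] [CompleteSpace F]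

lemma young_ineq (P Q : F) {c : ℝ} (hc : 0 < c) :
    2 * ⟪P, Q⟫ ≤ c⁻¹ * ‖P‖ ^ 2 + c * ‖Q‖ ^ 2 := by
  have h := sq_nonneg ‖P - c • Q‖
  rw [norm_sub_sq_real] at h
  rw [norm_smul, real_inner_smul_right] at h
  have : ‖(c:ℝ)‖ = c := abs_of_pos hc
  rw [this, mul_pow] at h
  have hc' : 0 < c⁻¹ := by positivity
  have key : (2 * ⟪P, Q⟫) * c ≤ (c⁻¹ * ‖P‖ ^ 2 + c * ‖Q‖ ^ 2) * c := by
    field_simp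
    nlinarith [h]
  exact le_of_mul_le_mul_right key hc

lemma hasGradientAt_of_fderiv {φ : F → ℝ} {D : F →L[ℝ] ℝ} {G x : F}
    (h : HasFDerivAt φ D x) (hD : ∀ v, D v = ⟪G, v⟫) : HasGradientAt φ G x := by
  rw [hasGradientAt_iff_hasFDerivAt]
  have : InnerProductSpace.toDual ℝ F G = D := by
    ext v
    rw [InnerProductSpace.toDual_apply_apply, hD]
  rwa [this]

lemma hasDerivAt_line {f : F → ℝ} {G : F} (x d : F) (τ : ℝ)
    (hG : HasGradientAt f G (x + τ • d)) :
    HasDerivAt (fun σ : ℝ => f (x + σ • d)) ⟪G, d⟫ τ := by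
  have h1 : HasDerivAt (fun σ : ℝ => x + σ • d) d τ := by
    simpa using ((hasDerivAt_id τ).smul_const d).const_add x
  have h2 := hG.hasFDerivAt.comp_hasDerivAt τ h1
  simpa [InnerProductSpace.toDual_apply_apply, Function.comp_def] using h2

set_option linter.unusedSectionVars false in
lemma convex_grad_le {φ : F → ℝ} (hφ : ConvexOn ℝ Set.univ φ) {x G : F}
    (hG : HasGradientAt φ G x) (y : F) : φ x + ⟪G, y - x⟫ ≤ φ y := by
  set d := y - x with hd
  have hline : HasDerivAt (fun σ : ℝ => φ (x + σ • d)) ⟪G, d⟫ 0 := by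
    have := hasDerivAt_line (f := φ) (G := G) x d 0 (by simpa using hG)
    exact this
  have hslope : Tendsto (slope (fun σ : ℝ => φ (x + σ • d)) 0) (𝓝[>] (0:ℝ)) (𝓝 ⟪G, d⟫) := by
    have := hasDerivAt_iff_tendsto_slope.1 hline
    exact this.mono_left (nhdsWithin_mono _ (by intro z hz; exact ne_of_gt hz))
  have hev : ∀ᶠ τ in 𝓝[>] (0:ℝ), slope (fun σ : ℝ => φ (x + σ • d)) 0 τ ≤ φ y - φ x := by
    filter_upwards [Ioo_mem_nhdsGT_of_mem (Set.mem_Ico.2 ⟨le_rfl, (zero_lt_one)⟩)] with τ hτ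
    obtain ⟨hτ0, hτ1⟩ := hτ
    have hcomb := hφ.2 (Set.mem_univ x) (Set.mem_univ y) (by linarith : (0:ℝ) ≤ 1 - τ)
      hτ0.le (by ring)
    have hpt : (1 - τ) • x + τ • y = x + τ • d := by
      rw [hd]; module
    rw [hpt] at hcomb
    rw [slope_def_field]
    have : (φ (x + τ • d) - φ (x + (0:ℝ) • d)) / (τ - 0) ≤ φ y - φ x := by
      rw [div_le_iff₀ (by simpa using hτ0)]
      simp only [zero_smul, add_zero, sub_zero]
      simp only [smul_eq_mul] at hcomb
      nlinarith [hcomb]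
    simpa [slope_def_field] using this
  have := le_of_tendsto hslope hev
  linarith [this]

set_option linter.unusedSectionVars false in
lemma descent_lemma {f : F → ℝ} {g : F → F} {L : ℝ} (hL : 0 ≤ L)
    (hg : ∀ z, HasGradientAt f (g z) z)
    (hlip : ∀ a b : F, ‖g a - g b‖ ≤ L * ‖a - b‖) (x d : F) :
    f (x + d) ≤ f x + ⟪g x, d⟫ + L / 2 * ‖d‖ ^ 2 := by
  set ψ : ℝ → ℝ := fun τ => f (x + τ • d) - τ * ⟪g x, d⟫ - L * τ ^ 2 / 2 * ‖d‖ ^ 2 with hψ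
  have hderiv : ∀ τ : ℝ, HasDerivAt ψ (⟪g (x + τ • d), d⟫ - ⟪g x, d⟫ - L * τ * ‖d‖ ^ 2) τ := by
    intro τ
    have h1 : HasDerivAt (fun σ : ℝ => f (x + σ • d)) ⟪g (x + τ • d), d⟫ τ :=
      hasDerivAt_line x d τ (hg _)
    have h2 : HasDerivAt (fun σ : ℝ => σ * ⟪g x, d⟫) ⟪g x, d⟫ τ := by
      simpa using (hasDerivAt_id τ).mul_const ⟪g x, d⟫
    have h3 : HasDerivAt (fun σ : ℝ => L * σ ^ 2 / 2 * ‖d‖ ^ 2) (L * τ * ‖d‖ ^ 2) τ := by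
      have : HasDerivAt (fun σ : ℝ => σ ^ 2) (2 * τ) τ := by
        simpa using (hasDerivAt_pow 2 τ)
      have := ((this.const_mul L).div_const 2).mul_const (‖d‖ ^ 2)
      rw [show L * τ * ‖d‖ ^ 2 = L * (2 * τ) / 2 * ‖d‖ ^ 2 by ring]
      exact this
    exact (h1.sub h2).sub h3
  have hmono : AntitoneOn ψ (Set.Icc 0 1) := by
    apply antitoneOn_of_deriv_nonpos (convex_Icc 0 1)
    · exact fun τ _ => (hderiv τ).continuousAt.continuousWithinAt
    · intro τ _
      exact (hderiv τ).differentiableAt.differentiableWithinAt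
    · intro τ hτ
      rw [interior_Icc] at hτ
      rw [(hderiv τ).deriv]
      have hb : ⟪g (x + τ • d) - g x, d⟫ ≤ L * τ * ‖d‖ ^ 2 := by
        calc ⟪g (x + τ • d) - g x, d⟫ ≤ ‖g (x + τ • d) - g x‖ * ‖d‖ := real_inner_le_norm _ _
          _ ≤ (L * ‖(x + τ • d) - x‖) * ‖d‖ := by
              apply mul_le_mul_of_nonneg_right (hlip _ _) (norm_nonneg _)
          _ = L * τ * ‖d‖ ^ 2 := by
              rw [add_sub_cancel_left, norm_smul]
              simp [abs_of_pos hτ.1]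
              ring
      rw [inner_sub_left] at hb
      linarith
  have h01 := hmono (Set.mem_Icc.2 ⟨le_rfl, zero_le_one⟩) (Set.mem_Icc.2 ⟨zero_le_one, le_rfl⟩)
    zero_le_one
  simp only [hψ, zero_smul, add_zero, zero_mul, zero_pow, mul_zero, sub_zero, one_smul,
    one_mul, one_pow, zero_div] at h01
  linarith [h01]

set_option linter.unusedSectionVars false in
lemma strong_grad_le {f : F → ℝ} {g : F → F} {μ : ℝ} (hg : ∀ z, HasGradientAt f (g z) z)
    (hsc : ConvexOn ℝ Set.univ (fun z => f z - μ / 2 * ‖z‖ ^ 2)) (p z : F) :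
    f p + ⟪g p, z - p⟫ + μ / 2 * ‖z - p‖ ^ 2 ≤ f z := by
  have h1 : HasFDerivAt f (InnerProductSpace.toDual ℝ F (g p)) p := (hg p).hasFDerivAt
  have h2 : HasFDerivAt (fun z : F => ‖z‖ ^ 2) (2 • innerSL ℝ p) p :=
    (hasStrictFDerivAt_norm_sq p).hasFDerivAt
  have h3 := h1.sub (h2.const_mul (μ / 2))
  have hgrad : HasGradientAt (fun z => f z - μ / 2 * ‖z‖ ^ 2) (g p - μ • p) p := by
    apply hasGradientAt_of_fderiv h3
    intro v
    simp only [ContinuousLinearMap.coe_sub', Pi.sub_apply, InnerProductSpace.toDual_apply_apply,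
      ContinuousLinearMap.coe_smul', Pi.smul_apply, ContinuousLinearMap.smul_apply,
      innerSL_apply_apply, inner_sub_left, real_inner_smul_left, smul_eq_mul]
    ring
  have hkey := convex_grad_le hsc hgrad z
  simp only [inner_sub_left, real_inner_smul_left] at hkey
  have e1 : ‖z - p‖ ^ 2 = ‖z‖ ^ 2 - 2 * ⟪z, p⟫ + ‖p‖ ^ 2 := norm_sub_sq_real z p
  have e2 : ⟪p, z - p⟫ = ⟪p, z⟫ - ⟪p, p⟫ := inner_sub_right p z p
  have e3 : ⟪p, p⟫ = ‖p‖ ^ 2 := real_inner_self_eq_norm_sq p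
  have e4 : ⟪z, p⟫ = ⟪p, z⟫ := real_inner_comm p z
  rw [e2, e3] at hkey
  rw [e1, e4]
  linarith

lemma le_sInf_mul {S : Set ℝ} (hne : S.Nonempty) {c R : ℝ} (hR : 0 ≤ R)
    (h : ∀ z ∈ S, c ≤ z * R) : c ≤ sInf S * R := by
  rcases eq_or_lt_of_le hR with h0 | h0
  · obtain ⟨z, hz⟩ := hne
    have := h z hz
    rw [← h0] at this ⊢
    simpa using this
  · have hlb : ∀ z ∈ S, c / R ≤ z := fun z hz => (div_le_iff₀ h0).2 (h z hz)
    have := le_csInf hne hlb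
    calc c = (c / R) * R := by field_simp
      _ ≤ sInf S * R := mul_le_mul_of_nonneg_right this h0.le

noncomputable def Cseq (μ L s : ℝ) (t : ℕ → ℝ) (k : ℕ) : ℝ :=
  (1 / (μ * s)) *
    sInf { z : ℝ | ∃ a b : ℝ, 0 < a ∧ 0 < b ∧
      z = max (max ((t (k + 1) - 1) * (1 + μ / a) / (t (k + 1) * (1 - s * L)))
        ((1 + b) * (t (k + 1) - 1) / t (k + 1) + s * (a + L)))
        ((1 + 1 / b) / t (k + 1)) }

noncomputable def Dseq (μ L s : ℝ) (t : ℕ → ℝ) (k : ℕ) : ℝ :=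
  sInf { z : ℝ | ∃ u v w : ℝ, 0 < u ∧ 0 < v ∧ 0 < w ∧
    z = max (max ((t (k + 2) - 1) * t (k + 2) / (t (k + 1) ^ 2 * (1 - s * L)) *
          (1 / (s * μ) - 2 + L * s) + (1 + u + 1 / v) / (1 - s * L))
        ((1 + v + w) * (t (k + 1) - 1) / (μ * s * t (k + 1))))
        ((1 + 1 / w + 1 / u) / (μ * s * t (k + 1))) } + 1

set_option maxHeartbeats 1000000 in
theorem nag_global_linear_convergence {n : ℕ}
    (f : EuclideanSpace ℝ (Fin n) → ℝ) (μ L s : ℝ)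
    (hμ : 0 < μ) (hμL : μ < L)
    (hf : ContDiff ℝ 1 f)
    (hsc : ConvexOn ℝ Set.univ (fun z => f z - μ / 2 * ‖z‖ ^ 2))
    (hlip : LipschitzWith (Real.toNNReal L) (fun z => gradient f z))
    (xs : EuclideanSpace ℝ (Fin n)) (hmin : ∀ z, f xs ≤ f z)
    (huniq : ∀ z, f z = f xs → z = xs)
    (t : ℕ → ℝ) (ht1 : t 1 = 1) (htmono : ∀ k, 1 ≤ k → t k < t (k + 1))
    (htlim : Tendsto t atTop atTop)
    (htrec : ∀ k, 1 ≤ k → t (k + 1) ^ 2 - t (k + 1) ≤ t k ^ 2)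
    (x y : ℕ → EuclideanSpace ℝ (Fin n))
    (hxy0 : x 0 = y 0)
    (hx : ∀ k, x (k + 1) = y k - s • gradient f (y k))
    (hy : ∀ k, y (k + 1) = x (k + 1) + ((t (k + 1) - 1) / t (k + 2)) • (x (k + 1) - x k))
    (hs0 : 0 < s) (hs1 : s < 1 / L)
    (ρ : ℕ → ℝ)
    (hρ : ∀ k, ρ k = 1 - 1 / min (Cseq μ L s t k) (Dseq μ L s t k))
    :
    (∀ k, ρ k ∈ Set.Ioo (0 : ℝ) 1) ∧
    ∀ k, 1 ≤ k →
      f (x k) - f xs ≤ (∏ i ∈ Finset.range k, ρ i) * ‖x 0 - xs‖ ^ 2 /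
        (2 * s * (t (k + 1) - 1) * t (k + 1)) := by
  -- basic scalar facts
  have hL0 : 0 < L := hμ.trans hμL
  have hsL : s * L < 1 := by
    rw [lt_div_iff₀ hL0] at hs1; linarith
  have hsμ : s * μ < 1 := by nlinarith
  have h1sL : 0 < 1 - s * L := by linarith
  have hμs : 0 < μ * s := by positivity
  -- gradient facts
  have hdiff : ∀ z, HasGradientAt f (gradient f z) z := fun z =>
    ((hf.differentiable one_ne_zero) z).hasGradientAt
  have hlipR : ∀ a b : EuclideanSpace ℝ (Fin n),
      ‖gradient f a - gradient f b‖ ≤ L * ‖a - b‖ := by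
    intro a b
    have h := hlip.dist_le_mul a b
    rw [dist_eq_norm, dist_eq_norm] at h
    calc ‖gradient f a - gradient f b‖ ≤ (Real.toNNReal L : ℝ) * ‖a - b‖ := h
      _ = L * ‖a - b‖ := by rw [Real.coe_toNNReal L hL0.le]
  have hsmooth : ∀ p d, f (p + d) ≤ f p + ⟪gradient f p, d⟫ + L / 2 * ‖d‖ ^ 2 :=
    descent_lemma hL0.le hdiff hlipR
  have hstrong : ∀ p z, f p + ⟪gradient f p, z - p⟫ + μ / 2 * ‖z - p‖ ^ 2 ≤ f z :=
    strong_grad_le hdiff hsc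
  -- facts about t
  have hT1 : ∀ k, 1 ≤ t (k + 1) := by
    intro k
    induction k with
    | zero => simp [ht1]
    | succ m ih => have := htmono (m + 1) (by omega); linarith
  have hTgt : ∀ k, 1 ≤ k → 1 < t (k + 1) := by
    intro k hk
    obtain ⟨m, rfl⟩ : ∃ m, k = m + 1 := ⟨k - 1, by omega⟩
    have := htmono (m + 1) (by omega)
    have := hT1 m
    linarith
  -- abbreviations
  set G : ℕ → EuclideanSpace ℝ (Fin n) := fun k => gradient f (y k) with hG
  set P : ℕ → EuclideanSpace ℝ (Fin n) := fun k => y k - xs with hP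
  set Q : ℕ → EuclideanSpace ℝ (Fin n) := fun k => y k - x k with hQ
  set v : ℕ → EuclideanSpace ℝ (Fin n) := fun k => x k + t (k + 1) • (y k - x k) with hv
  have hδ0 : ∀ k, 0 ≤ f (x k) - f xs := fun k => sub_nonneg.2 (hmin _)
  -- fact 1
  have fact1 : ∀ k, f (x (k + 1)) - f xs ≤ (f (x k) - f xs) + ⟪G k, Q k⟫
      - μ / 2 * ‖Q k‖ ^ 2 - s * (1 - s * L / 2) * ‖G k‖ ^ 2 := by
    intro k
    have hd := hsmooth (y k) (-(s • G k))
    rw [← sub_eq_add_neg, ← hx k] at hd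
    rw [inner_neg_right, real_inner_smul_right, real_inner_self_eq_norm_sq] at hd
    rw [norm_neg, norm_smul, mul_pow] at hd
    have habs : ‖s‖ ^ 2 = s ^ 2 := by rw [Real.norm_eq_abs, sq_abs]
    rw [habs] at hd
    have hst := hstrong (y k) (x k)
    have e1 : x k - y k = -(Q k) := by simp only [hQ]; abel
    rw [e1, inner_neg_right, norm_neg] at hst
    linarith
  -- fact 2
  have fact2 : ∀ k, f (x (k + 1)) - f xs ≤ ⟪G k, P k⟫
      - μ / 2 * ‖P k‖ ^ 2 - s * (1 - s * L / 2) * ‖G k‖ ^ 2 := by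
    intro k
    have hd := hsmooth (y k) (-(s • G k))
    rw [← sub_eq_add_neg, ← hx k] at hd
    rw [inner_neg_right, real_inner_smul_right, real_inner_self_eq_norm_sq] at hd
    rw [norm_neg, norm_smul, mul_pow] at hd
    have habs : ‖s‖ ^ 2 = s ^ 2 := by rw [Real.norm_eq_abs, sq_abs]
    rw [habs] at hd
    have hst := hstrong (y k) xs
    have e1 : xs - y k = -(P k) := by simp only [hP]; abel
    rw [e1, inner_neg_right, norm_neg] at hst
    linarith
  -- fact 3
  have fact3 : ∀ k, f (x k) - f xs ≤ ⟪G k, P k⟫ - ⟪G k, Q k⟫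
      + L / 2 * ‖Q k‖ ^ 2 - μ / 2 * ‖P k‖ ^ 2 := by
    intro k
    have hd := hsmooth (y k) (-(Q k))
    have e0 : y k + -(Q k) = x k := by simp only [hQ]; abel
    rw [e0, inner_neg_right, norm_neg] at hd
    have hst := hstrong (y k) xs
    have e1 : xs - y k = -(P k) := by simp only [hP]; abel
    rw [e1, inner_neg_right, norm_neg] at hst
    linarith
  -- v identities
  have hvPQ : ∀ k, v k - xs = P k + (t (k + 1) - 1) • Q k := by
    intro k
    simp only [hv, hP, hQ]
    module
  have hvrec : ∀ k, v (k + 1) - xs = (v k - xs) - (s * t (k + 1)) • G k := by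
    intro k
    have ht2 : t (k + 2) ≠ 0 := by have := hT1 (k + 1); intro h; rw [h] at this; linarith
    simp only [hv, hy k, hx k]
    match_scalars <;> field_simp <;> ring
  -- norm expansions
  have nvk : ∀ k, ‖v k - xs‖ ^ 2 = ‖P k‖ ^ 2 + (t (k + 1) - 1) ^ 2 * ‖Q k‖ ^ 2
      + 2 * (t (k + 1) - 1) * ⟪P k, Q k⟫ := by
    intro k
    rw [hvPQ k, norm_add_sq_real, real_inner_smul_right, norm_smul, Real.norm_eq_abs, mul_pow,
      sq_abs]
    ring
  have nvk1 : ∀ k, ‖v (k + 1) - xs‖ ^ 2 = ‖v k - xs‖ ^ 2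
      - 2 * (s * t (k + 1)) * (⟪G k, P k⟫ + (t (k + 1) - 1) * ⟪G k, Q k⟫)
      + (s * t (k + 1)) ^ 2 * ‖G k‖ ^ 2 := by
    intro k
    rw [hvrec k, norm_sub_sq_real, real_inner_smul_right, norm_smul, Real.norm_eq_abs, mul_pow,
      sq_abs]
    have : ⟪v k - xs, G k⟫ = ⟪G k, P k⟫ + (t (k + 1) - 1) * ⟪G k, Q k⟫ := by
      rw [hvPQ k, inner_add_left, real_inner_smul_left, real_inner_comm (P k),
        real_inner_comm (Q k)]
    rw [this]
    ring
  -- Lyapunov function and decrease quantity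
  have htpos : ∀ k, 0 < t (k + 1) := fun k => lt_of_lt_of_le one_pos (hT1 k)
  set E : ℕ → ℝ := fun k =>
    2 * s * t (k + 1) * (t (k + 1) - 1) * (f (x k) - f xs) + ‖v k - xs‖ ^ 2 with hE
  set R : ℕ → ℝ := fun k =>
    s ^ 2 * t (k + 1) ^ 2 * (1 - s * L) * ‖G k‖ ^ 2
      + s * μ * t (k + 1) * (t (k + 1) - 1) * ‖Q k‖ ^ 2
      + s * μ * t (k + 1) * ‖P k‖ ^ 2 with hR
  have hc1 : ∀ k, (0:ℝ) ≤ 2 * s * t (k + 1) * (t (k + 1) - 1) := fun k =>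
    mul_nonneg (mul_nonneg (by linarith) (htpos k).le) (by linarith [hT1 k])
  have hE0 : ∀ k, 0 ≤ E k := fun k =>
    add_nonneg (mul_nonneg (hc1 k) (hδ0 k)) (sq_nonneg _)
  have hR0 : ∀ k, 0 ≤ R k := by
    intro k
    apply add_nonneg (add_nonneg _ _) _
    · exact mul_nonneg (mul_nonneg (mul_nonneg (sq_nonneg s) (sq_nonneg _)) h1sL.le) (sq_nonneg _)
    · exact mul_nonneg (mul_nonneg (mul_nonneg (mul_nonneg hs0.le hμ.le) (htpos k).le)
        (by linarith [hT1 k])) (sq_nonneg _)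
    · exact mul_nonneg (mul_nonneg (mul_nonneg hs0.le hμ.le) (htpos k).le) (sq_nonneg _)
  have star : ∀ k, E (k + 1) ≤ E k - R k := by
    intro k
    have hc2 : (0:ℝ) ≤ 2 * s * t (k + 1) := mul_nonneg (by linarith) (htpos k).le
    have e1 := mul_le_mul_of_nonneg_left (fact1 k) (hc1 k)
    have e2 := mul_le_mul_of_nonneg_left (fact2 k) hc2
    have hTT : 2 * s * (t (k + 2) ^ 2 - t (k + 2)) * (f (x (k + 1)) - f xs)
        ≤ 2 * s * t (k + 1) ^ 2 * (f (x (k + 1)) - f xs) := by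
      apply mul_le_mul_of_nonneg_right _ (hδ0 (k + 1))
      have := htrec (k + 1) (by omega)
      nlinarith [hs0]
    simp only [hE, hR]
    rw [nvk1 k]
    linarith [e1, e2, hTT]
  -- the C-type bound
  have Cbound : ∀ k, ∀ a b : ℝ, 0 < a → 0 < b →
      μ * s * E k ≤ (max (max ((t (k + 1) - 1) * (1 + μ / a) / (t (k + 1) * (1 - s * L)))
        ((1 + b) * (t (k + 1) - 1) / t (k + 1) + s * (a + L)))
        ((1 + 1 / b) / t (k + 1))) * R k := by
    intro k a b ha hb
    have hTk := hT1 k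
    have htne : t (k + 1) ≠ 0 := (htpos k).ne'
    have hstT : (0:ℝ) ≤ s * t (k + 1) * (t (k + 1) - 1) :=
      mul_nonneg (mul_nonneg hs0.le (htpos k).le) (by linarith)
    -- Young inequalities
    have y1 := young_ineq (G k) (-(Q k)) ha
    rw [inner_neg_right, norm_neg] at y1
    have y2 := young_ineq (G k) (P k) hμ
    have y3 := young_ineq (P k) ((t (k + 1) - 1) • Q k) hb
    rw [real_inner_smul_right, norm_smul, Real.norm_eq_abs, mul_pow, sq_abs] at y3
    have y1' := mul_le_mul_of_nonneg_left y1 hstT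
    have y2' := mul_le_mul_of_nonneg_left y2 hstT
    have e3 := mul_le_mul_of_nonneg_left (fact3 k) (hc1 k)
    -- step A : structural bound on E k
    have stepA : E k ≤ s * t (k + 1) * (t (k + 1) - 1) * (a⁻¹ + μ⁻¹) * ‖G k‖ ^ 2
        + (s * t (k + 1) * (t (k + 1) - 1) * (a + L) + (1 + b) * (t (k + 1) - 1) ^ 2) * ‖Q k‖ ^ 2
        + (1 + b⁻¹) * ‖P k‖ ^ 2 := by
      simp only [hE]
      rw [nvk k]
      linarith [e3, y1', y2', y3]
    -- coefficient identities
    have heq1 : μ * s * (s * t (k + 1) * (t (k + 1) - 1) * (a⁻¹ + μ⁻¹))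
        = ((t (k + 1) - 1) * (1 + μ / a) / (t (k + 1) * (1 - s * L)))
          * (s ^ 2 * t (k + 1) ^ 2 * (1 - s * L)) := by
      field_simp [htne, h1sL.ne', ha.ne', hμ.ne']
      ring
    have heq2 : μ * s * (s * t (k + 1) * (t (k + 1) - 1) * (a + L)
          + (1 + b) * (t (k + 1) - 1) ^ 2)
        = ((1 + b) * (t (k + 1) - 1) / t (k + 1) + s * (a + L))
          * (s * μ * t (k + 1) * (t (k + 1) - 1)) := by
      field_simp [htne]
      ring
    have heq3 : μ * s * (1 + b⁻¹) = ((1 + 1 / b) / t (k + 1)) * (s * μ * t (k + 1)) := by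
      field_simp [htne, hb.ne']
    set M := max (max ((t (k + 1) - 1) * (1 + μ / a) / (t (k + 1) * (1 - s * L)))
        ((1 + b) * (t (k + 1) - 1) / t (k + 1) + s * (a + L)))
        ((1 + 1 / b) / t (k + 1)) with hM
    have hm1 : (t (k + 1) - 1) * (1 + μ / a) / (t (k + 1) * (1 - s * L)) ≤ M :=
      le_trans (le_max_left _ _) (le_max_left _ _)
    have hm2 : (1 + b) * (t (k + 1) - 1) / t (k + 1) + s * (a + L) ≤ M :=
      le_trans (le_max_right _ _) (le_max_left _ _)
    have hm3 : (1 + 1 / b) / t (k + 1) ≤ M := le_max_right _ _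
    have hg0 : (0:ℝ) ≤ s ^ 2 * t (k + 1) ^ 2 * (1 - s * L) * ‖G k‖ ^ 2 :=
      mul_nonneg (mul_nonneg (mul_nonneg (sq_nonneg s) (sq_nonneg _)) h1sL.le) (sq_nonneg _)
    have hq0 : (0:ℝ) ≤ s * μ * t (k + 1) * (t (k + 1) - 1) * ‖Q k‖ ^ 2 :=
      mul_nonneg (mul_nonneg (mul_nonneg (mul_nonneg hs0.le hμ.le) (htpos k).le)
        (by linarith)) (sq_nonneg _)
    have hp0 : (0:ℝ) ≤ s * μ * t (k + 1) * ‖P k‖ ^ 2 :=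
      mul_nonneg (mul_nonneg (mul_nonneg hs0.le hμ.le) (htpos k).le) (sq_nonneg _)
    calc μ * s * E k ≤ μ * s * (s * t (k + 1) * (t (k + 1) - 1) * (a⁻¹ + μ⁻¹) * ‖G k‖ ^ 2
        + (s * t (k + 1) * (t (k + 1) - 1) * (a + L) + (1 + b) * (t (k + 1) - 1) ^ 2) * ‖Q k‖ ^ 2
        + (1 + b⁻¹) * ‖P k‖ ^ 2) := mul_le_mul_of_nonneg_left stepA hμs.le
      _ = ((t (k + 1) - 1) * (1 + μ / a) / (t (k + 1) * (1 - s * L)))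
            * (s ^ 2 * t (k + 1) ^ 2 * (1 - s * L) * ‖G k‖ ^ 2)
          + ((1 + b) * (t (k + 1) - 1) / t (k + 1) + s * (a + L))
            * (s * μ * t (k + 1) * (t (k + 1) - 1) * ‖Q k‖ ^ 2)
          + ((1 + 1 / b) / t (k + 1)) * (s * μ * t (k + 1) * ‖P k‖ ^ 2) := by
            linear_combination (norm := ring1) heq1 * ‖G k‖ ^ 2 + heq2 * ‖Q k‖ ^ 2
              + heq3 * ‖P k‖ ^ 2
      _ ≤ M * (s ^ 2 * t (k + 1) ^ 2 * (1 - s * L) * ‖G k‖ ^ 2)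
          + M * (s * μ * t (k + 1) * (t (k + 1) - 1) * ‖Q k‖ ^ 2)
          + M * (s * μ * t (k + 1) * ‖P k‖ ^ 2) := by
            refine add_le_add (add_le_add ?_ ?_) ?_
            · exact mul_le_mul_of_nonneg_right hm1 (by positivity)
            · exact mul_le_mul_of_nonneg_right hm2 (by positivity)
            · exact mul_le_mul_of_nonneg_right hm3 (by positivity)
      _ = M * R k := by simp only [hR]; ring
  -- the D-type bound
  have Dbound : ∀ k, ∀ uu vv ww : ℝ, 0 < uu → 0 < vv → 0 < ww →
      E (k + 1) ≤ (max (max ((t (k + 2) - 1) * t (k + 2) / (t (k + 1) ^ 2 * (1 - s * L)) *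
          (1 / (s * μ) - 2 + L * s) + (1 + uu + 1 / vv) / (1 - s * L))
        ((1 + vv + ww) * (t (k + 1) - 1) / (μ * s * t (k + 1))))
        ((1 + 1 / ww + 1 / uu) / (μ * s * t (k + 1)))) * R k := by
    intro k uu vv ww huu hvv hww
    have hTk := hT1 k
    have htne : t (k + 1) ≠ 0 := (htpos k).ne'
    have hd : f (x (k + 1)) - f xs ≤ (μ⁻¹ / 2 - s * (1 - s * L / 2)) * ‖G k‖ ^ 2 := by
      have y2 := young_ineq (G k) (P k) hμ
      linarith [fact2 k, y2]
    have hd' := mul_le_mul_of_nonneg_left hd (hc1 (k + 1))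
    have cpg : ⟪P k, G k⟫ = ⟪G k, P k⟫ := real_inner_comm _ _
    have yw := young_ineq (P k) ((t (k + 1) - 1) • Q k) hww
    rw [real_inner_smul_right, norm_smul, Real.norm_eq_abs, mul_pow, sq_abs] at yw
    have yu := young_ineq (P k) (-((s * t (k + 1)) • G k)) huu
    rw [inner_neg_right, real_inner_smul_right, norm_neg, norm_smul, Real.norm_eq_abs,
      mul_pow, sq_abs, cpg] at yu
    have yv := young_ineq (-((s * t (k + 1)) • G k)) ((t (k + 1) - 1) • Q k) hvv
    rw [inner_neg_left, real_inner_smul_left, real_inner_smul_right, norm_neg, norm_smul,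
      norm_smul, Real.norm_eq_abs, Real.norm_eq_abs, mul_pow, mul_pow, sq_abs, sq_abs] at yv
    have stepA : E (k + 1) ≤ (2 * s * t (k + 2) * (t (k + 2) - 1) * (μ⁻¹ / 2 - s * (1 - s * L / 2))
          + (1 + uu + vv⁻¹) * (s ^ 2 * t (k + 1) ^ 2)) * ‖G k‖ ^ 2
        + (1 + vv + ww) * (t (k + 1) - 1) ^ 2 * ‖Q k‖ ^ 2
        + (1 + ww⁻¹ + uu⁻¹) * ‖P k‖ ^ 2 := by
      simp only [hE]
      rw [nvk1 k, nvk k]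
      simp only [show k + 1 + 1 = k + 2 from rfl] at hd' ⊢
      linarith [hd', yw, yu, yv]
    have heq1 : 2 * s * t (k + 2) * (t (k + 2) - 1) * (μ⁻¹ / 2 - s * (1 - s * L / 2))
          + (1 + uu + vv⁻¹) * (s ^ 2 * t (k + 1) ^ 2)
        = ((t (k + 2) - 1) * t (k + 2) / (t (k + 1) ^ 2 * (1 - s * L)) *
            (1 / (s * μ) - 2 + L * s) + (1 + uu + 1 / vv) / (1 - s * L))
          * (s ^ 2 * t (k + 1) ^ 2 * (1 - s * L)) := by
      field_simp [htne, h1sL.ne', hμ.ne', hs0.ne', hvv.ne']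
      ring
    have heq2 : (1 + vv + ww) * (t (k + 1) - 1) ^ 2
        = ((1 + vv + ww) * (t (k + 1) - 1) / (μ * s * t (k + 1)))
          * (s * μ * t (k + 1) * (t (k + 1) - 1)) := by
      field_simp [htne, hμ.ne', hs0.ne']
    have heq3 : (1 + ww⁻¹ + uu⁻¹)
        = ((1 + 1 / ww + 1 / uu) / (μ * s * t (k + 1))) * (s * μ * t (k + 1)) := by
      field_simp [htne, hμ.ne', hs0.ne', huu.ne', hww.ne']
    set M := max (max ((t (k + 2) - 1) * t (k + 2) / (t (k + 1) ^ 2 * (1 - s * L)) *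
          (1 / (s * μ) - 2 + L * s) + (1 + uu + 1 / vv) / (1 - s * L))
        ((1 + vv + ww) * (t (k + 1) - 1) / (μ * s * t (k + 1))))
        ((1 + 1 / ww + 1 / uu) / (μ * s * t (k + 1))) with hM
    have hm1 : (t (k + 2) - 1) * t (k + 2) / (t (k + 1) ^ 2 * (1 - s * L)) *
          (1 / (s * μ) - 2 + L * s) + (1 + uu + 1 / vv) / (1 - s * L) ≤ M :=
      le_trans (le_max_left _ _) (le_max_left _ _)
    have hm2 : (1 + vv + ww) * (t (k + 1) - 1) / (μ * s * t (k + 1)) ≤ M :=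
      le_trans (le_max_right _ _) (le_max_left _ _)
    have hm3 : (1 + 1 / ww + 1 / uu) / (μ * s * t (k + 1)) ≤ M := le_max_right _ _
    calc E (k + 1) ≤ (2 * s * t (k + 2) * (t (k + 2) - 1) * (μ⁻¹ / 2 - s * (1 - s * L / 2))
          + (1 + uu + vv⁻¹) * (s ^ 2 * t (k + 1) ^ 2)) * ‖G k‖ ^ 2
        + (1 + vv + ww) * (t (k + 1) - 1) ^ 2 * ‖Q k‖ ^ 2
        + (1 + ww⁻¹ + uu⁻¹) * ‖P k‖ ^ 2 := stepA
      _ = ((t (k + 2) - 1) * t (k + 2) / (t (k + 1) ^ 2 * (1 - s * L)) *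
            (1 / (s * μ) - 2 + L * s) + (1 + uu + 1 / vv) / (1 - s * L))
            * (s ^ 2 * t (k + 1) ^ 2 * (1 - s * L) * ‖G k‖ ^ 2)
          + ((1 + vv + ww) * (t (k + 1) - 1) / (μ * s * t (k + 1)))
            * (s * μ * t (k + 1) * (t (k + 1) - 1) * ‖Q k‖ ^ 2)
          + ((1 + 1 / ww + 1 / uu) / (μ * s * t (k + 1))) * (s * μ * t (k + 1) * ‖P k‖ ^ 2) := by
            linear_combination (norm := ring1) heq1 * ‖G k‖ ^ 2 + heq2 * ‖Q k‖ ^ 2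
              + heq3 * ‖P k‖ ^ 2
      _ ≤ M * (s ^ 2 * t (k + 1) ^ 2 * (1 - s * L) * ‖G k‖ ^ 2)
          + M * (s * μ * t (k + 1) * (t (k + 1) - 1) * ‖Q k‖ ^ 2)
          + M * (s * μ * t (k + 1) * ‖P k‖ ^ 2) := by
            refine add_le_add (add_le_add ?_ ?_) ?_
            · exact mul_le_mul_of_nonneg_right hm1 (by positivity)
            · refine mul_le_mul_of_nonneg_right hm2 ?_
              exact mul_nonneg (mul_nonneg (mul_nonneg (mul_nonneg hs0.le hμ.le) (htpos k).le)
                (by linarith)) (sq_nonneg _)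
            · exact mul_le_mul_of_nonneg_right hm3 (by positivity)
      _ = M * R k := by simp only [hR]; ring
  -- lower bound for Cseq
  have hClb : ∀ k, L / μ ≤ Cseq μ L s t k := by
    intro k
    have hne : { z : ℝ | ∃ a b : ℝ, 0 < a ∧ 0 < b ∧
        z = max (max ((t (k + 1) - 1) * (1 + μ / a) / (t (k + 1) * (1 - s * L)))
          ((1 + b) * (t (k + 1) - 1) / t (k + 1) + s * (a + L)))
          ((1 + 1 / b) / t (k + 1)) }.Nonempty := ⟨_, ⟨1, 1, one_pos, one_pos, rfl⟩⟩
    have hlb : s * L ≤ sInf { z : ℝ | ∃ a b : ℝ, 0 < a ∧ 0 < b ∧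
        z = max (max ((t (k + 1) - 1) * (1 + μ / a) / (t (k + 1) * (1 - s * L)))
          ((1 + b) * (t (k + 1) - 1) / t (k + 1) + s * (a + L)))
          ((1 + 1 / b) / t (k + 1)) } := by
      apply le_csInf hne
      rintro z ⟨a, b, ha, hb, rfl⟩
      have h1 : (0:ℝ) ≤ (1 + b) * (t (k + 1) - 1) / t (k + 1) :=
        div_nonneg (mul_nonneg (by linarith) (by linarith [hT1 k])) (htpos k).le
      have h2 : s * L ≤ (1 + b) * (t (k + 1) - 1) / t (k + 1) + s * (a + L) := by nlinarith
      exact le_trans h2 (le_trans (le_max_right _ _) (le_max_left _ _))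
    have hpos : (0:ℝ) < 1 / (μ * s) := by positivity
    calc L / μ = 1 / (μ * s) * (s * L) := by field_simp
      _ ≤ _ := mul_le_mul_of_nonneg_left hlb hpos.le
      _ = Cseq μ L s t k := by rw [Cseq]
  have hC1 : ∀ k, 1 < Cseq μ L s t k := fun k =>
    lt_of_lt_of_le ((one_lt_div hμ).2 hμL) (hClb k)
  -- lower bound for Dseq
  have hDlb : ∀ k, 1 / (1 - s * L) + 1 ≤ Dseq μ L s t k := by
    intro k
    have hY : (0:ℝ) ≤ 1 / (s * μ) - 2 + L * s := by
      have hsl : 0 < s * L := by positivity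
      have e1 : 1 / (s * L) - 2 + L * s = (1 - s * L) ^ 2 / (s * L) := by field_simp; ring
      have e2 : (0:ℝ) ≤ (1 - s * L) ^ 2 / (s * L) := by positivity
      have e3 : 1 / (s * L) ≤ 1 / (s * μ) :=
        one_div_le_one_div_of_le (by positivity) (by nlinarith)
      linarith
    have hne : { z : ℝ | ∃ u v w : ℝ, 0 < u ∧ 0 < v ∧ 0 < w ∧
        z = max (max ((t (k + 2) - 1) * t (k + 2) / (t (k + 1) ^ 2 * (1 - s * L)) *
            (1 / (s * μ) - 2 + L * s) + (1 + u + 1 / v) / (1 - s * L))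
          ((1 + v + w) * (t (k + 1) - 1) / (μ * s * t (k + 1))))
          ((1 + 1 / w + 1 / u) / (μ * s * t (k + 1))) }.Nonempty :=
      ⟨_, ⟨1, 1, 1, one_pos, one_pos, one_pos, rfl⟩⟩
    have hlb : 1 / (1 - s * L) ≤ sInf { z : ℝ | ∃ u v w : ℝ, 0 < u ∧ 0 < v ∧ 0 < w ∧
        z = max (max ((t (k + 2) - 1) * t (k + 2) / (t (k + 1) ^ 2 * (1 - s * L)) *
            (1 / (s * μ) - 2 + L * s) + (1 + u + 1 / v) / (1 - s * L))
          ((1 + v + w) * (t (k + 1) - 1) / (μ * s * t (k + 1))))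
          ((1 + 1 / w + 1 / u) / (μ * s * t (k + 1))) } := by
      apply le_csInf hne
      rintro z ⟨uu, vv, ww, huu, hvv, hww, rfl⟩
      have hX : (0:ℝ) ≤ (t (k + 2) - 1) * t (k + 2) / (t (k + 1) ^ 2 * (1 - s * L)) :=
        div_nonneg (mul_nonneg (by linarith [hT1 (k + 1)]) (by linarith [hT1 (k + 1)]))
          (mul_nonneg (sq_nonneg _) h1sL.le)
      have hW : 1 / (1 - s * L) ≤ (1 + uu + 1 / vv) / (1 - s * L) := by
        have : (0:ℝ) < 1 / vv := by positivity
        gcongr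
        linarith
      have hXY : (0:ℝ) ≤ (t (k + 2) - 1) * t (k + 2) / (t (k + 1) ^ 2 * (1 - s * L)) *
          (1 / (s * μ) - 2 + L * s) := mul_nonneg hX hY
      have : 1 / (1 - s * L) ≤ (t (k + 2) - 1) * t (k + 2) / (t (k + 1) ^ 2 * (1 - s * L)) *
          (1 / (s * μ) - 2 + L * s) + (1 + uu + 1 / vv) / (1 - s * L) := by linarith
      exact le_trans this (le_trans (le_max_left _ _) (le_max_left _ _))
    rw [Dseq]
    linarith
  have hD1 : ∀ k, 1 < Dseq μ L s t k := by
    intro k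
    have : (0:ℝ) < 1 / (1 - s * L) := by positivity
    linarith [hDlb k]
  -- part 1
  have part1 : ∀ k, ρ k ∈ Set.Ioo (0:ℝ) 1 := by
    intro k
    have hM1 : 1 < min (Cseq μ L s t k) (Dseq μ L s t k) := lt_min (hC1 k) (hD1 k)
    have hM0 : 0 < min (Cseq μ L s t k) (Dseq μ L s t k) := lt_trans one_pos hM1
    rw [hρ k]
    constructor
    · have : 1 / min (Cseq μ L s t k) (Dseq μ L s t k) < 1 := by
        rw [div_lt_one hM0]; exact hM1
      linarith
    · have : 0 < 1 / min (Cseq μ L s t k) (Dseq μ L s t k) := by positivity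
      linarith
  -- the per-step bounds via infima
  have hEC : ∀ k, E k ≤ Cseq μ L s t k * R k := by
    intro k
    have hne : { z : ℝ | ∃ a b : ℝ, 0 < a ∧ 0 < b ∧
        z = max (max ((t (k + 1) - 1) * (1 + μ / a) / (t (k + 1) * (1 - s * L)))
          ((1 + b) * (t (k + 1) - 1) / t (k + 1) + s * (a + L)))
          ((1 + 1 / b) / t (k + 1)) }.Nonempty := ⟨_, ⟨1, 1, one_pos, one_pos, rfl⟩⟩
    have hall : ∀ z ∈ { z : ℝ | ∃ a b : ℝ, 0 < a ∧ 0 < b ∧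
        z = max (max ((t (k + 1) - 1) * (1 + μ / a) / (t (k + 1) * (1 - s * L)))
          ((1 + b) * (t (k + 1) - 1) / t (k + 1) + s * (a + L)))
          ((1 + 1 / b) / t (k + 1)) }, μ * s * E k ≤ z * R k := by
      rintro z ⟨a, b, ha, hb, rfl⟩
      exact Cbound k a b ha hb
    have h := le_sInf_mul hne (hR0 k) hall
    have hpos : (0:ℝ) < 1 / (μ * s) := by positivity
    have h2 := mul_le_mul_of_nonneg_left h hpos.le
    calc E k = 1 / (μ * s) * (μ * s * E k) := by field_simp
      _ ≤ 1 / (μ * s) * (sInf { z : ℝ | ∃ a b : ℝ, 0 < a ∧ 0 < b ∧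
          z = max (max ((t (k + 1) - 1) * (1 + μ / a) / (t (k + 1) * (1 - s * L)))
            ((1 + b) * (t (k + 1) - 1) / t (k + 1) + s * (a + L)))
            ((1 + 1 / b) / t (k + 1)) } * R k) := h2
      _ = Cseq μ L s t k * R k := by rw [Cseq]; ring
  have hED : ∀ k, E (k + 1) ≤ (Dseq μ L s t k - 1) * R k := by
    intro k
    have hne : { z : ℝ | ∃ u v w : ℝ, 0 < u ∧ 0 < v ∧ 0 < w ∧
        z = max (max ((t (k + 2) - 1) * t (k + 2) / (t (k + 1) ^ 2 * (1 - s * L)) *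
            (1 / (s * μ) - 2 + L * s) + (1 + u + 1 / v) / (1 - s * L))
          ((1 + v + w) * (t (k + 1) - 1) / (μ * s * t (k + 1))))
          ((1 + 1 / w + 1 / u) / (μ * s * t (k + 1))) }.Nonempty :=
      ⟨_, ⟨1, 1, 1, one_pos, one_pos, one_pos, rfl⟩⟩
    have hall : ∀ z ∈ { z : ℝ | ∃ u v w : ℝ, 0 < u ∧ 0 < v ∧ 0 < w ∧
        z = max (max ((t (k + 2) - 1) * t (k + 2) / (t (k + 1) ^ 2 * (1 - s * L)) *
            (1 / (s * μ) - 2 + L * s) + (1 + u + 1 / v) / (1 - s * L))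
          ((1 + v + w) * (t (k + 1) - 1) / (μ * s * t (k + 1))))
          ((1 + 1 / w + 1 / u) / (μ * s * t (k + 1))) }, E (k + 1) ≤ z * R k := by
      rintro z ⟨uu, vv, ww, huu, hvv, hww, rfl⟩
      exact Dbound k uu vv ww huu hvv hww
    have h := le_sInf_mul hne (hR0 k) hall
    have heq : Dseq μ L s t k - 1 = sInf { z : ℝ | ∃ u v w : ℝ, 0 < u ∧ 0 < v ∧ 0 < w ∧
        z = max (max ((t (k + 2) - 1) * t (k + 2) / (t (k + 1) ^ 2 * (1 - s * L)) *
            (1 / (s * μ) - 2 + L * s) + (1 + u + 1 / v) / (1 - s * L))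
          ((1 + v + w) * (t (k + 1) - 1) / (μ * s * t (k + 1))))
          ((1 + 1 / w + 1 / u) / (μ * s * t (k + 1))) } := by rw [Dseq]; ring
    rw [heq]
    exact h
  -- contraction
  have contraction : ∀ k, E (k + 1) ≤ ρ k * E k := by
    intro k
    rw [hρ k]
    rcases le_total (Cseq μ L s t k) (Dseq μ L s t k) with hCD | hDC
    · rw [min_eq_left hCD]
      have hC0 : 0 < Cseq μ L s t k := lt_trans one_pos (hC1 k)
      have h3 : E k / Cseq μ L s t k ≤ R k := (div_le_iff₀ hC0).2 (by linarith [hEC k])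
      calc E (k + 1) ≤ E k - R k := star k
        _ ≤ E k - E k / Cseq μ L s t k := by linarith
        _ = (1 - 1 / Cseq μ L s t k) * E k := by field_simp
    · rw [min_eq_right hDC]
      have hD1' := hD1 k
      have hD0 : 0 < Dseq μ L s t k := by linarith
      have h5 : (Dseq μ L s t k - 1) * R k ≤ (Dseq μ L s t k - 1) * (E k - E (k + 1)) :=
        mul_le_mul_of_nonneg_left (by linarith [star k]) (by linarith)
      have h4 : Dseq μ L s t k * E (k + 1) ≤ (Dseq μ L s t k - 1) * E k := by
        nlinarith [hED k, h5]
      rw [← mul_le_mul_iff_of_pos_right hD0]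
      have he : (1 - 1 / Dseq μ L s t k) * E k * Dseq μ L s t k
          = (Dseq μ L s t k - 1) * E k := by field_simp
      rw [he]
      linarith [h4]
  -- iterate
  have hEprod : ∀ k, E k ≤ (∏ i ∈ Finset.range k, ρ i) * E 0 := by
    intro k
    induction k with
    | zero => simp
    | succ m ih =>
      calc E (m + 1) ≤ ρ m * E m := contraction m
        _ ≤ ρ m * ((∏ i ∈ Finset.range m, ρ i) * E 0) :=
            mul_le_mul_of_nonneg_left ih (part1 m).1.le
        _ = (∏ i ∈ Finset.range (m + 1), ρ i) * E 0 := by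
            rw [Finset.prod_range_succ]; ring
  have hE0val : E 0 = ‖x 0 - xs‖ ^ 2 := by
    simp only [hE, hv]
    rw [← hxy0, ht1]
    simp
  -- conclusion
  refine ⟨part1, ?_⟩
  intro k hk
  have hT := hTgt k hk
  have hden : 0 < 2 * s * (t (k + 1) - 1) * t (k + 1) :=
    mul_pos (mul_pos (by linarith) (by linarith)) (htpos k)
  rw [div_eq_mul_inv, ← div_eq_mul_inv, le_div_iff₀ hden]
  have h1 := hEprod k
  rw [hE0val] at h1
  have h2 : 2 * s * t (k + 1) * (t (k + 1) - 1) * (f (x k) - f xs) ≤ E k := by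
    simp only [hE]
    nlinarith [sq_nonneg ‖v k - xs‖]
  linarith [h1, h2]
end

section
/- Let 0 < μ < L and s ∈ (0, 1/L), and let {t_k} satisfy the Nesterov rule. Then the sequence ρ_k := 1 - 1/min{C_k, D_k} (k ≥ 0) satisfies: sup_{k≥0} ρ_k lies in the open interval (1 - (1-Ls)μs, 1 - (1-Ls)μs/(1 + max{μ/L, 1/8})), and lim_{k→∞} ρ_k exists and lies in the open interval (1 - (1-Ls)μs, 1 - (1-Ls)μs/(1 + μ/L)); in particular both lie in (0, 1). -/
open Filter Finset
open scoped RealInnerProductSpace Topology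

/-- The parametric set whose infimum defines `Cseq` (with `τ = t (k+1)`). -/
def auxSC (μ L s τ : ℝ) : Set ℝ :=
  { z : ℝ | ∃ a b : ℝ, 0 < a ∧ 0 < b ∧
      z = max (max ((τ - 1) * (1 + μ / a) / (τ * (1 - s * L)))
        ((1 + b) * (τ - 1) / τ + s * (a + L)))
        ((1 + 1 / b) / τ) }

/-- The parametric set whose infimum defines `Dseq` (with `τ = t (k+1)`, `τ' = t (k+2)`). -/
def auxSD (μ L s τ τ' : ℝ) : Set ℝ :=
  { z : ℝ | ∃ u v w : ℝ, 0 < u ∧ 0 < v ∧ 0 < w ∧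
    z = max (max ((τ' - 1) * τ' / (τ ^ 2 * (1 - s * L)) *
          (1 / (s * μ) - 2 + L * s) + (1 + u + 1 / v) / (1 - s * L))
        ((1 + v + w) * (τ - 1) / (μ * s * τ)))
        ((1 + 1 / w + 1 / u) / (μ * s * τ)) }

/-- Limit version of the C-set. -/
def auxSCl (μ L s : ℝ) : Set ℝ :=
  { z : ℝ | ∃ a : ℝ, 0 < a ∧ z = max ((1 + μ / a) / (1 - s * L)) (1 + s * a + s * L) }

noncomputable def auxICl (μ L s : ℝ) : ℝ := sInf (auxSCl μ L s)

/-- Limit version of the D-set. -/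
def auxSDl (μ L s : ℝ) : Set ℝ :=
  { z : ℝ | ∃ v : ℝ, 0 < v ∧
      z = max ((1 / (s * μ) - 2 + L * s) / (1 - s * L) + (1 + 1 / v) / (1 - s * L))
        ((1 + v) / (μ * s)) }

noncomputable def auxJDl (μ L s : ℝ) : ℝ := sInf (auxSDl μ L s)

example (μ L s : ℝ) (t : ℕ → ℝ) (k : ℕ) :
    Cseq μ L s t k = (1 / (μ * s)) * sInf (auxSC μ L s (t (k + 1))) := rfl

example (μ L s : ℝ) (t : ℕ → ℝ) (k : ℕ) :
    Dseq μ L s t k = sInf (auxSD μ L s (t (k + 1)) (t (k + 2))) + 1 := rfl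

section basic
variable {μ L s τ τ' : ℝ}

lemma auxSC_nonempty : (auxSC μ L s τ).Nonempty :=
  ⟨_, 1, 1, one_pos, one_pos, rfl⟩

lemma auxSC_bddBelow (hτ : 1 ≤ τ) : BddBelow (auxSC μ L s τ) := by
  refine ⟨0, ?_⟩
  rintro z ⟨a, b, ha, hb, rfl⟩
  have hτ0 : (0:ℝ) < τ := lt_of_lt_of_le one_pos hτ
  have h3 : (0:ℝ) ≤ (1 + 1 / b) / τ := by
    have : (0:ℝ) ≤ 1/b := by positivity
    have : (0:ℝ) ≤ 1 + 1/b := by linarith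
    positivity
  exact h3.trans (le_max_right _ _)

lemma auxSCl_nonempty : (auxSCl μ L s).Nonempty := ⟨_, 1, one_pos, rfl⟩

lemma auxSCl_bddBelow (hμ : 0 < μ) (hμL : μ < L) (hs0 : 0 < s) :
    BddBelow (auxSCl μ L s) := by
  refine ⟨0, ?_⟩
  rintro z ⟨a, ha, rfl⟩
  have hL : 0 < L := hμ.trans hμL
  have : (0:ℝ) ≤ 1 + s*a + s*L := by positivity
  exact this.trans (le_max_right _ _)

lemma auxSDl_nonempty : (auxSDl μ L s).Nonempty := ⟨_, 1, one_pos, rfl⟩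

lemma auxSDl_bddBelow (hμ : 0 < μ) (hμL : μ < L) (hs0 : 0 < s) :
    BddBelow (auxSDl μ L s) := by
  refine ⟨0, ?_⟩
  rintro z ⟨v, hv, rfl⟩
  have : (0:ℝ) ≤ (1 + v) / (μ * s) := by positivity
  exact this.trans (le_max_right _ _)

lemma auxSD_nonempty : (auxSD μ L s τ τ').Nonempty :=
  ⟨_, 1, 1, 1, one_pos, one_pos, one_pos, rfl⟩

lemma auxSD_bddBelow (hμ : 0 < μ) (hs0 : 0 < s) (hτ : 1 ≤ τ) :
    BddBelow (auxSD μ L s τ τ') := by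
  refine ⟨0, ?_⟩
  rintro z ⟨u, v, w, hu, hv, hw, rfl⟩
  have hτ0 : (0:ℝ) < τ := lt_of_lt_of_le one_pos hτ
  have h3 : (0:ℝ) ≤ (1 + 1 / w + 1 / u) / (μ * s * τ) := by positivity
  exact h3.trans (le_max_right _ _)

end basic

section part2
variable {μ L s : ℝ}


/-- `auxICl` is strictly bigger than `1/(1-sL)`. -/
lemma auxICl_gt (hμ : 0 < μ) (hμL : μ < L) (hs0 : 0 < s) (hsL : s * L < 1) :
    1 / (1 - s * L) < auxICl μ L s := by
  have hL : 0 < L := hμ.trans hμL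
  have h1l : 0 < 1 - s * L := by linarith
  set A0 : ℝ := ((s*L)^2 / (1 - s*L) + 1) / s with hA0def
  have hA0 : 0 < A0 := by positivity
  have hsA0 : s * A0 = (s*L)^2 / (1 - s*L) + 1 := by
    rw [hA0def]; field_simp
  set g : ℝ := min ((1 + μ / A0) / (1 - s * L)) (1 + s * A0 + s * L) with hgdef
  have hid : 1 / (1 - s*L) = 1 + s*L + (s*L)^2 / (1 - s*L) := by
    field_simp; ring
  have hgap : 1 / (1 - s * L) < g := by
    apply lt_min
    · have h1 : (1:ℝ) < 1 + μ / A0 := by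
        have := div_pos hμ hA0; linarith
      exact (div_lt_div_iff_of_pos_right h1l).mpr h1
    · rw [hsA0, hid]; ring_nf; linarith
  refine hgap.trans_le (le_csInf auxSCl_nonempty ?_)
  rintro z ⟨a, ha, rfl⟩
  rcases le_total a A0 with h | h
  · refine le_trans (min_le_left _ _) (le_trans ?_ (le_max_left _ _))
    have : μ / A0 ≤ μ / a := div_le_div_of_nonneg_left hμ.le ha h
    exact (div_le_div_iff_of_pos_right h1l).mpr (by linarith)
  · refine le_trans (min_le_right _ _) (le_trans ?_ (le_max_right _ _))
    have : s * A0 ≤ s * a := by nlinarith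
    linarith

end part2

section part2b
variable {μ L s : ℝ}

/-- `auxJDl` is at least `1/((1-sL)(μs))`. -/
lemma auxJDl_ge (hμ : 0 < μ) (hμL : μ < L) (hs0 : 0 < s) (hsL : s * L < 1) :
    1 / ((1 - s * L) * (μ * s)) ≤ auxJDl μ L s := by
  have hL : 0 < L := hμ.trans hμL
  have h1l : 0 < 1 - s * L := by linarith
  have hq : 0 < μ * s := by positivity
  apply le_csInf auxSDl_nonempty
  rintro z ⟨v, hv, rfl⟩
  rcases le_total v (1 / (1 - s * L)) with h | h
  · refine le_trans ?_ (le_max_left _ _)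
    have hvinv : 1 - s * L ≤ 1 / v := by
      rw [le_div_iff₀ hv]
      calc (1 - s*L) * v ≤ (1 - s*L) * (1/(1 - s*L)) := by
            exact mul_le_mul_of_nonneg_left h h1l.le
        _ = 1 := by field_simp
    have hkey : (1 / (s * μ) - 2 + L * s) / (1 - s * L) + (1 + (1 - s*L)) / (1 - s * L)
        = 1 / ((1 - s * L) * (μ * s)) := by
      field_simp
      ring
    calc 1 / ((1 - s * L) * (μ * s))
        = (1 / (s * μ) - 2 + L * s) / (1 - s * L) + (1 + (1 - s*L)) / (1 - s * L) := hkey.symm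
      _ ≤ _ := by
          apply add_le_add le_rfl
          exact (div_le_div_iff_of_pos_right h1l).mpr (by linarith)
  · refine le_trans ?_ (le_max_right _ _)
    have h1 : 1 / (1 - s * L) ≤ v := h
    calc 1 / ((1 - s * L) * (μ * s)) = (1 / (1 - s*L)) / (μ * s) := by
          rw [div_div]
      _ ≤ (1 + v) / (μ * s) := by
          exact (div_le_div_iff_of_pos_right hq).mpr (by linarith)

end part2b

section part2c
variable {μ L s : ℝ}

/-- key strict upper bound on the D-limit. -/
lemma auxJDl_lt (hμ : 0 < μ) (hμL : μ < L) (hs0 : 0 < s) (hsL : s * L < 1) :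
    auxJDl μ L s + 1 < (1 + μ / L) / ((1 - s * L) * (μ * s)) := by
  unfold auxJDl
  have hL : 0 < L := hμ.trans hμL
  have h1l : 0 < 1 - s * L := by linarith
  have hq : 0 < μ * s := by positivity
  obtain ⟨V, hVdef⟩ : ∃ V : ℝ, V = (1 + μ / L) / (1 - s * L) - 1 - μ * s := ⟨_, rfl⟩
  have hμsc : μ * s < μ / L := by
    have h2 : s * L < 1 := hsL
    rw [lt_div_iff₀ hL]
    nlinarith
  have hlV : s * L < V := by
    rw [hVdef, lt_sub_iff_add_lt, lt_sub_iff_add_lt, lt_div_iff₀ h1l]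
    nlinarith [mul_pos hq (mul_pos hs0 hL), sq_nonneg (s*L)]
  obtain ⟨v, hvdef⟩ : ∃ v : ℝ, v = (s * L + V) / 2 := ⟨_, rfl⟩
  have hv1 : s * L < v := by rw [hvdef]; linarith
  have hv2 : v < V := by rw [hvdef]; linarith
  have hv : 0 < v := lt_trans (by positivity) hv1
  have hmem : max ((1 / (s * μ) - 2 + L * s) / (1 - s * L) + (1 + 1 / v) / (1 - s * L))
      ((1 + v) / (μ * s)) ∈ auxSDl μ L s := ⟨v, hv, rfl⟩
  have hJle := csInf_le (auxSDl_bddBelow hμ hμL hs0) hmem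
  have hb1 : (1 / (s * μ) - 2 + L * s) / (1 - s * L) + (1 + 1 / v) / (1 - s * L) + 1
      < (1 + μ / L) / ((1 - s * L) * (μ * s)) := by
    have hiv : 1 / v < 1 / (s * L) := by
      apply one_div_lt_one_div_of_lt (by positivity) hv1
    have e1 : (1 + μ / L) / ((1 - s * L) * (μ * s))
        - ((1 / (s * μ) - 2 + L * s) / (1 - s * L) + (1 + 1 / v) / (1 - s * L) + 1)
        = (1 / (s * L) - 1 / v) / (1 - s * L) := by
      have h1l' : 0 < 1 - L * s := by linarith
      field_simp
      ring
    nlinarith [div_pos (by linarith : (0:ℝ) < 1 / (s * L) - 1 / v) h1l]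
  have hb2 : (1 + v) / (μ * s) + 1 < (1 + μ / L) / ((1 - s * L) * (μ * s)) := by
    have e2 : (1 + μ / L) / ((1 - s * L) * (μ * s)) - ((1 + v) / (μ * s) + 1)
        = (V - v) / (μ * s) := by
      rw [hVdef]
      field_simp
      ring
    nlinarith [div_pos (by linarith : (0:ℝ) < V - v) hq]
  rcases max_cases ((1 / (s * μ) - 2 + L * s) / (1 - s * L) + (1 + 1 / v) / (1 - s * L))
      ((1 + v) / (μ * s)) with ⟨hm, _⟩ | ⟨hm, _⟩ <;> rw [hm] at hJle <;> linarith

end part2c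

section part3
variable {μ L s : ℝ}

lemma auxSC_inf_ge (hμ : 0 < μ) (hμL : μ < L) (hs0 : 0 < s) (hsL : s * L < 1)
    {τ : ℝ} (hτ : 1 ≤ τ) :
    (1 - 1 / τ) * auxICl μ L s ≤ sInf (auxSC μ L s τ) := by
  have hL : 0 < L := hμ.trans hμL
  have h1l : 0 < 1 - s * L := by linarith
  have hτ0 : (0:ℝ) < τ := lt_of_lt_of_le one_pos hτ
  have hθ0 : 0 ≤ 1 - 1 / τ := by
    have : 1 / τ ≤ 1 := by rw [div_le_one hτ0]; exact hτ
    linarith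
  have hθ1 : 1 - 1 / τ ≤ 1 := by
    have : 0 < 1 / τ := by positivity
    linarith
  apply le_csInf auxSC_nonempty
  rintro z ⟨a, b, ha, hb, rfl⟩
  have hmem : max ((1 + μ / a) / (1 - s * L)) (1 + s * a + s * L) ∈ auxSCl μ L s :=
    ⟨a, ha, rfl⟩
  have hIle : auxICl μ L s ≤ max ((1 + μ / a) / (1 - s * L)) (1 + s * a + s * L) :=
    csInf_le (auxSCl_bddBelow hμ hμL hs0) hmem
  have hτid : (τ - 1) / τ = 1 - 1 / τ := by
    rw [sub_div, div_self hτ0.ne']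
  have h1 : (1 - 1 / τ) * ((1 + μ / a) / (1 - s * L))
      = (τ - 1) * (1 + μ / a) / (τ * (1 - s * L)) := by
    rw [← hτid, div_mul_div_comm]
  have h2 : (1 - 1 / τ) * (1 + s * a + s * L) ≤ (1 + b) * (τ - 1) / τ + s * (a + L) := by
    have hid : (1 + b) * (τ - 1) / τ = (1 + b) * (1 - 1 / τ) := by
      rw [mul_div_assoc, hτid]
    rw [hid]
    nlinarith [mul_nonneg hb.le hθ0, mul_nonneg (by positivity : (0:ℝ) ≤ s * a + s * L)
      (by positivity : (0:ℝ) ≤ 1 / τ)]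
  calc (1 - 1 / τ) * auxICl μ L s
      ≤ (1 - 1 / τ) * max ((1 + μ / a) / (1 - s * L)) (1 + s * a + s * L) :=
        mul_le_mul_of_nonneg_left hIle hθ0
    _ ≤ max (max ((τ - 1) * (1 + μ / a) / (τ * (1 - s * L)))
        ((1 + b) * (τ - 1) / τ + s * (a + L))) ((1 + 1 / b) / τ) := by
        rcases le_total ((1 + μ / a) / (1 - s * L)) (1 + s * a + s * L) with h | h
        · rw [max_eq_right h]
          exact le_trans h2 ((le_max_right _ _).trans (le_max_left _ _))
        · rw [max_eq_left h, h1]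
          exact (le_max_left _ _).trans (le_max_left _ _)

lemma auxSC_inf_ge_sL (hμ : 0 < μ) (hμL : μ < L) (hs0 : 0 < s)
    {τ : ℝ} (hτ : 1 ≤ τ) :
    s * L ≤ sInf (auxSC μ L s τ) := by
  have hL : 0 < L := hμ.trans hμL
  have hτ0 : (0:ℝ) < τ := lt_of_lt_of_le one_pos hτ
  apply le_csInf auxSC_nonempty
  rintro z ⟨a, b, ha, hb, rfl⟩
  have h0 : (0:ℝ) ≤ (1 + b) * (τ - 1) / τ := by
    have : (0:ℝ) ≤ τ - 1 := by linarith
    positivity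
  have : s * L ≤ (1 + b) * (τ - 1) / τ + s * (a + L) := by nlinarith
  exact le_trans this ((le_max_right _ _).trans (le_max_left _ _))

lemma auxSC_inf_le (hμ : 0 < μ) (hμL : μ < L) (hs0 : 0 < s) (hsL : s * L < 1)
    {ε : ℝ} (hε : 0 < ε) :
    ∃ X0 > 0, ∀ τ : ℝ, 1 ≤ τ → 1 / τ < X0 →
      sInf (auxSC μ L s τ) ≤ auxICl μ L s + ε := by
  have hL : 0 < L := hμ.trans hμL
  have h1l : 0 < 1 - s * L := by linarith
  have hlt : auxICl μ L s < auxICl μ L s + ε / 2 := by linarith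
  obtain ⟨z, hzmem, hzlt⟩ := (csInf_lt_iff (auxSCl_bddBelow hμ hμL hs0) auxSCl_nonempty).mp hlt
  obtain ⟨a, ha, rfl⟩ := hzmem
  refine ⟨(1 / (1 - s * L)) / (1 + 2 / ε), by positivity, ?_⟩
  intro τ hτ hxlt
  have hτ0 : (0:ℝ) < τ := lt_of_lt_of_le one_pos hτ
  have hθ0 : 0 ≤ 1 - 1 / τ := by
    have : 1 / τ ≤ 1 := by rw [div_le_one hτ0]; exact hτ
    linarith
  have hx0 : 0 < 1 / τ := by positivity
  have hmax1 : (1 + μ / a) / (1 - s * L) < auxICl μ L s + ε / 2 :=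
    lt_of_le_of_lt (le_max_left _ _) hzlt
  have hmax2 : 1 + s * a + s * L < auxICl μ L s + ε / 2 :=
    lt_of_le_of_lt (le_max_right _ _) hzlt
  have hICpos : 1 / (1 - s * L) < auxICl μ L s := auxICl_gt hμ hμL hs0 hsL
  have hmem : max (max ((τ - 1) * (1 + μ / a) / (τ * (1 - s * L)))
      ((1 + ε / 2) * (τ - 1) / τ + s * (a + L))) ((1 + 1 / (ε / 2)) / τ) ∈ auxSC μ L s τ :=
    ⟨a, ε / 2, ha, by positivity, rfl⟩
  refine le_trans (csInf_le (auxSC_bddBelow hτ) hmem) ?_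
  have hτid : (τ - 1) / τ = 1 - 1 / τ := by
    rw [sub_div, div_self hτ0.ne']
  have hb1 : (τ - 1) * (1 + μ / a) / (τ * (1 - s * L)) ≤ auxICl μ L s + ε := by
    have hid : (1 - 1 / τ) * ((1 + μ / a) / (1 - s * L))
        = (τ - 1) * (1 + μ / a) / (τ * (1 - s * L)) := by
      rw [← hτid, div_mul_div_comm]
    rw [← hid]
    have hc1 : 0 ≤ (1 + μ / a) / (1 - s * L) := by positivity
    nlinarith
  have hb2 : (1 + ε / 2) * (τ - 1) / τ + s * (a + L) ≤ auxICl μ L s + ε := by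
    have hid : (1 + ε / 2) * (τ - 1) / τ = (1 + ε / 2) * (1 - 1 / τ) := by
      rw [mul_div_assoc, hτid]
    rw [hid]
    nlinarith [mul_nonneg (by positivity : (0:ℝ) ≤ 1 + ε / 2) hx0.le]
  have hb3 : (1 + 1 / (ε / 2)) / τ ≤ auxICl μ L s + ε := by
    have h1 : (1 + 1 / (ε / 2)) / τ = (1 + 2 / ε) * (1 / τ) := by
      rw [one_div_div]; ring
    have h2 : (1 + 2 / ε) * (1 / τ) < (1 + 2 / ε) * ((1 / (1 - s * L)) / (1 + 2 / ε)) :=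
      mul_lt_mul_of_pos_left hxlt (by positivity)
    have h3 : (1 + 2 / ε) * ((1 / (1 - s * L)) / (1 + 2 / ε)) = 1 / (1 - s * L) := by
      rw [mul_comm, div_mul_cancel₀ _ (by positivity : (0:ℝ) < 1 + 2 / ε).ne']
    rw [h1]
    nlinarith
  exact max_le (max_le hb1 hb2) hb3

end part3

section part4
variable {μ L s : ℝ}

/-- Per-τ strict upper bound on the C-infimum. -/
lemma auxSC_inf_lt (hμ : 0 < μ) (hμL : μ < L) (hs0 : 0 < s) (hsL : s * L < 1)
    {τ : ℝ} (hτ : 1 ≤ τ) :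
    sInf (auxSC μ L s τ) < (1 + max (μ / L) (1 / 8)) / (1 - s * L) := by
  have hL : 0 < L := hμ.trans hμL
  have h1l : 0 < 1 - s * L := by linarith
  have hq : 0 < μ * s := by positivity
  obtain ⟨M, hMdef⟩ : ∃ M : ℝ, M = max (μ / L) (1 / 8) := ⟨_, rfl⟩
  have hM8 : (1:ℝ) / 8 ≤ M := hMdef ▸ le_max_right _ _
  have hMc : μ / L ≤ M := hMdef ▸ le_max_left _ _
  have hM0 : 0 < M := lt_of_lt_of_le (by norm_num) hM8
  have hc0 : 0 < μ / L := by positivity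
  rw [← hMdef]
  rcases eq_or_lt_of_le hτ with hτ1 | hτ1
  · -- τ = 1
    obtain ⟨b, hbdef⟩ : ∃ b : ℝ, b = 2 * (1 - s * L) / (M + s * L) := ⟨_, rfl⟩
    have hMl : 0 < M + s * L := by positivity
    have hb : 0 < b := by rw [hbdef]; positivity
    have hmem : max (max ((τ - 1) * (1 + μ / μ) / (τ * (1 - s * L)))
        ((1 + b) * (τ - 1) / τ + s * (μ + L))) ((1 + 1 / b) / τ) ∈ auxSC μ L s τ :=
      ⟨μ, b, hμ, hb, rfl⟩
    refine lt_of_le_of_lt (csInf_le (auxSC_bddBelow hτ) hmem) ?_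
    rw [← hτ1]
    have e1 : ((1:ℝ) - 1) * (1 + μ / μ) / (1 * (1 - s * L)) = 0 := by ring
    have e2 : (1 + b) * ((1:ℝ) - 1) / 1 + s * (μ + L) = s * μ + s * L := by ring
    have e3 : (1 + 1 / b) / (1:ℝ) = 1 + (M + s * L) / (2 * (1 - s * L)) := by
      rw [hbdef, one_div_div]; ring
    rw [e1, e2, e3]
    have hT : 0 < (1 + M) / (1 - s * L) := by positivity
    apply max_lt (max_lt hT ?_) ?_
    · rw [lt_div_iff₀ h1l]
      nlinarith [sq_nonneg (2 * (s * L) - 1), mul_pos hs0 hL]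
    · have hgap : (1 + M) / (1 - s * L) - (1 + (M + s * L) / (2 * (1 - s * L)))
          = (M + s * L) / (2 * (1 - s * L)) := by
        field_simp
        ring
      linarith [div_pos hMl (by positivity : (0:ℝ) < 2 * (1 - s * L))]
  · -- τ > 1
    have hτ0 : (0:ℝ) < τ := lt_trans one_pos hτ1
    have hτ10 : 0 < τ - 1 := by linarith
    obtain ⟨δ, hδdef⟩ : ∃ δ : ℝ, δ = (1 + M) / (2 * τ) := ⟨_, rfl⟩
    have hδ : 0 < δ := by rw [hδdef]; positivity
    have hδτ : δ * τ = (1 + M) / 2 := by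
      rw [hδdef]; field_simp
    obtain ⟨a, hadef⟩ : ∃ a : ℝ, a = μ / (M + δ) := ⟨_, rfl⟩
    have hMδ : 0 < M + δ := by positivity
    have ha : 0 < a := by rw [hadef]; positivity
    obtain ⟨b, hbdef⟩ : ∃ b : ℝ, b = 1 / (τ - 1) := ⟨_, rfl⟩
    have hb : 0 < b := by rw [hbdef]; positivity
    have hmem : max (max ((τ - 1) * (1 + μ / a) / (τ * (1 - s * L)))
        ((1 + b) * (τ - 1) / τ + s * (a + L))) ((1 + 1 / b) / τ) ∈ auxSC μ L s τ :=
      ⟨a, b, ha, hb, rfl⟩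
    refine lt_of_le_of_lt (csInf_le (auxSC_bddBelow hτ) hmem) ?_
    have hμa : μ / a = M + δ := by
      rw [hadef, div_div_eq_mul_div, mul_comm, mul_div_assoc, div_self hμ.ne', mul_one]
    have hsa : s * a = μ * s / (M + δ) := by
      rw [hadef]; field_simp
    have e2 : (1 + b) * (τ - 1) / τ + s * (a + L) = 1 + μ * s / (M + δ) + s * L := by
      rw [hbdef, mul_comm s (a + L), add_mul, ← hsa]
      field_simp
      ring
    have e3 : (1 + 1 / b) / τ = 1 := by
      rw [hbdef, one_div_one_div]
      field_simp; ring
    apply max_lt (max_lt ?_ ?_) ?_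
    · -- first term
      rw [hμa, div_lt_div_iff₀ (by positivity) h1l]
      nlinarith [mul_pos hM0 hτ10]
    · rw [e2, lt_div_iff₀ h1l]
      have hkey : μ * s / (M + δ) < s * L := by
        have h1 : μ * s / (M + δ) < μ * s / M :=
          div_lt_div_of_pos_left hq hM0 (by linarith)
        have h2 : μ * s / M ≤ μ * s / (μ / L) := by
          apply div_le_div_of_nonneg_left hq.le hc0 hMc
        have h3 : μ * s / (μ / L) = s * L := by
          field_simp
        linarith [h2.trans_eq h3]
      nlinarith [sq_nonneg (4 * (s * L) - 1), mul_pos hs0 hL]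
    · rw [e3, lt_div_iff₀ h1l]
      nlinarith

end part4

section part5
variable {μ L s : ℝ}

lemma auxK_nonneg (hμ : 0 < μ) (hμL : μ < L) (hs0 : 0 < s) (hsL : s * L < 1) :
    0 ≤ 1 / (s * μ) - 2 + L * s := by
  have hL : 0 < L := hμ.trans hμL
  have hsl : 0 < s * L := by positivity
  have hsμ : 0 < s * μ := by positivity
  have h1 : 1 / (s * L) ≤ 1 / (s * μ) :=
    one_div_le_one_div_of_le hsμ (by nlinarith)
  have h2 : 1 / (s * L) * (s * L) = 1 := div_mul_cancel₀ 1 hsl.ne'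
  nlinarith [sq_nonneg (1 - s * L), mul_le_mul_of_nonneg_right h1 hsl.le]

lemma auxSD_inf_ge0 (hμ : 0 < μ) (hs0 : 0 < s) {τ τ' : ℝ} (hτ : 1 ≤ τ) :
    0 ≤ sInf (auxSD μ L s τ τ') := by
  apply le_csInf auxSD_nonempty
  rintro z ⟨u, v, w, hu, hv, hw, rfl⟩
  have hτ0 : (0:ℝ) < τ := lt_of_lt_of_le one_pos hτ
  have h3 : (0:ℝ) ≤ (1 + 1 / w + 1 / u) / (μ * s * τ) := by positivity
  exact h3.trans (le_max_right _ _)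

lemma auxSD_inf_ge (hμ : 0 < μ) (hμL : μ < L) (hs0 : 0 < s) (hsL : s * L < 1)
    {τ τ' : ℝ} (hτ : 1 ≤ τ) (hττ' : τ ≤ τ') :
    (1 - 1 / τ) * auxJDl μ L s ≤ sInf (auxSD μ L s τ τ') := by
  have hL : 0 < L := hμ.trans hμL
  have h1l : 0 < 1 - s * L := by linarith
  have hq : 0 < μ * s := by positivity
  have hτ0 : (0:ℝ) < τ := lt_of_lt_of_le one_pos hτ
  have hτ'0 : (0:ℝ) < τ' := lt_of_lt_of_le hτ0 hττ'
  have hθ0 : 0 ≤ 1 - 1 / τ := by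
    have : 1 / τ ≤ 1 := by rw [div_le_one hτ0]; exact hτ
    linarith
  have hθ1 : 1 - 1 / τ ≤ 1 := by
    have : 0 < 1 / τ := by positivity
    linarith
  have hK := auxK_nonneg hμ hμL hs0 hsL
  apply le_csInf auxSD_nonempty
  rintro z ⟨u, v, w, hu, hv, hw, rfl⟩
  have hmem : max ((1 / (s * μ) - 2 + L * s) / (1 - s * L) + (1 + 1 / v) / (1 - s * L))
      ((1 + v) / (μ * s)) ∈ auxSDl μ L s := ⟨v, hv, rfl⟩
  have hJle := csInf_le (auxSDl_bddBelow hμ hμL hs0) hmem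
  have hτid : (τ - 1) / τ = 1 - 1 / τ := by rw [sub_div, div_self hτ0.ne']
  -- coefficient comparison for the first term
  have hRcoef : (1 - 1 / τ) * (1 / (1 - s * L)) ≤ (τ' - 1) * τ' / (τ ^ 2 * (1 - s * L)) := by
    rw [← hτid]
    rw [div_mul_div_comm, div_le_div_iff₀ (by positivity) (by positivity)]
    nlinarith [mul_nonneg (mul_nonneg (sub_nonneg.mpr hττ')
      (by linarith : (0:ℝ) ≤ τ' + τ - 1)) (mul_pos hτ0 h1l).le]
  have hclaim1 : (1 - 1 / τ) * ((1 / (s * μ) - 2 + L * s) / (1 - s * L) + (1 + 1 / v) / (1 - s * L))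
      ≤ (τ' - 1) * τ' / (τ ^ 2 * (1 - s * L)) * (1 / (s * μ) - 2 + L * s)
        + (1 + u + 1 / v) / (1 - s * L) := by
    have ha : (1 - 1 / τ) * ((1 / (s * μ) - 2 + L * s) / (1 - s * L))
        = (1 - 1 / τ) * (1 / (1 - s * L)) * (1 / (s * μ) - 2 + L * s) := by ring
    have hb' : (1 - 1 / τ) * (1 / (1 - s * L)) * (1 / (s * μ) - 2 + L * s)
        ≤ (τ' - 1) * τ' / (τ ^ 2 * (1 - s * L)) * (1 / (s * μ) - 2 + L * s) :=
      mul_le_mul_of_nonneg_right hRcoef hK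
    have hc : (1 - 1 / τ) * ((1 + 1 / v) / (1 - s * L)) ≤ (1 + u + 1 / v) / (1 - s * L) := by
      have h1 : (0:ℝ) ≤ (1 + 1 / v) / (1 - s * L) := by positivity
      have h2 : (1 + 1 / v) / (1 - s * L) ≤ (1 + u + 1 / v) / (1 - s * L) := by
        apply (div_le_div_iff_of_pos_right h1l).mpr; linarith
      nlinarith
    calc (1 - 1 / τ) * ((1 / (s * μ) - 2 + L * s) / (1 - s * L) + (1 + 1 / v) / (1 - s * L))
        = (1 - 1 / τ) * ((1 / (s * μ) - 2 + L * s) / (1 - s * L))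
          + (1 - 1 / τ) * ((1 + 1 / v) / (1 - s * L)) := by ring
      _ ≤ _ := by rw [ha]; exact add_le_add hb' hc
  have hclaim2 : (1 - 1 / τ) * ((1 + v) / (μ * s))
      ≤ (1 + v + w) * (τ - 1) / (μ * s * τ) := by
    have hid : (1 + v) * (τ - 1) / (μ * s * τ)
        = (1 - 1 / τ) * ((1 + v) / (μ * s)) := by
      rw [← hτid]; field_simp
    rw [← hid]
    apply div_le_div_of_nonneg_right ?_ (by positivity) |>.trans (le_refl _)
    nlinarith
  calc (1 - 1 / τ) * auxJDl μ L s
      ≤ (1 - 1 / τ) * max ((1 / (s * μ) - 2 + L * s) / (1 - s * L) + (1 + 1 / v) / (1 - s * L))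
        ((1 + v) / (μ * s)) := mul_le_mul_of_nonneg_left hJle hθ0
    _ ≤ max (max ((τ' - 1) * τ' / (τ ^ 2 * (1 - s * L)) * (1 / (s * μ) - 2 + L * s)
          + (1 + u + 1 / v) / (1 - s * L)) ((1 + v + w) * (τ - 1) / (μ * s * τ)))
        ((1 + 1 / w + 1 / u) / (μ * s * τ)) := by
        rcases le_total ((1 / (s * μ) - 2 + L * s) / (1 - s * L) + (1 + 1 / v) / (1 - s * L))
          ((1 + v) / (μ * s)) with h | h
        · rw [max_eq_right h]
          exact le_trans hclaim2 ((le_max_right _ _).trans (le_max_left _ _))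
        · rw [max_eq_left h]
          exact le_trans hclaim1 ((le_max_left _ _).trans (le_max_left _ _))

end part5

section part6
variable {μ L s : ℝ}

lemma auxSD_inf_le (hμ : 0 < μ) (hμL : μ < L) (hs0 : 0 < s) (hsL : s * L < 1)
    {ε : ℝ} (hε : 0 < ε) :
    ∃ X0 > 0, ∀ τ τ' : ℝ, 1 ≤ τ → τ ≤ τ' → τ' ^ 2 - τ' ≤ τ ^ 2 → 1 / τ < X0 →
      sInf (auxSD μ L s τ τ') ≤ auxJDl μ L s + ε := by
  have hL : 0 < L := hμ.trans hμL
  have h1l : 0 < 1 - s * L := by linarith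
  have hq : 0 < μ * s := by positivity
  have hK := auxK_nonneg hμ hμL hs0 hsL
  have hlt : auxJDl μ L s < auxJDl μ L s + ε / 3 := by linarith
  obtain ⟨z, hzmem, hzlt⟩ :=
    (csInf_lt_iff (auxSDl_bddBelow hμ hμL hs0) auxSDl_nonempty).mp hlt
  obtain ⟨v, hv, rfl⟩ := hzmem
  have hmax1 : (1 / (s * μ) - 2 + L * s) / (1 - s * L) + (1 + 1 / v) / (1 - s * L)
      < auxJDl μ L s + ε / 3 := lt_of_le_of_lt (le_max_left _ _) hzlt
  have hmax2 : (1 + v) / (μ * s) < auxJDl μ L s + ε / 3 :=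
    lt_of_le_of_lt (le_max_right _ _) hzlt
  obtain ⟨u, hudef⟩ : ∃ u : ℝ, u = ε * (1 - s * L) / 3 := ⟨_, rfl⟩
  obtain ⟨w, hwdef⟩ : ∃ w : ℝ, w = ε * (μ * s) / 3 := ⟨_, rfl⟩
  have hu : 0 < u := by rw [hudef]; positivity
  have hw : 0 < w := by rw [hwdef]; positivity
  obtain ⟨coef, hcoefdef⟩ : ∃ c : ℝ, c = (1 + 1 / w + 1 / u) / (μ * s) := ⟨_, rfl⟩
  have hcoef : 0 < coef := by rw [hcoefdef]; positivity
  refine ⟨(1 / ((1 - s * L) * (μ * s))) / coef, by positivity, ?_⟩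
  intro τ τ' hτ hττ' hrec hxlt
  have hτ0 : (0:ℝ) < τ := lt_of_lt_of_le one_pos hτ
  have hmem : max (max ((τ' - 1) * τ' / (τ ^ 2 * (1 - s * L)) * (1 / (s * μ) - 2 + L * s)
      + (1 + u + 1 / v) / (1 - s * L)) ((1 + v + w) * (τ - 1) / (μ * s * τ)))
      ((1 + 1 / w + 1 / u) / (μ * s * τ)) ∈ auxSD μ L s τ τ' :=
    ⟨u, v, w, hu, hv, hw, rfl⟩
  refine le_trans (csInf_le (auxSD_bddBelow hμ hs0 hτ) hmem) ?_
  have hb1 : (τ' - 1) * τ' / (τ ^ 2 * (1 - s * L)) * (1 / (s * μ) - 2 + L * s)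
      + (1 + u + 1 / v) / (1 - s * L) ≤ auxJDl μ L s + ε := by
    have hR : (τ' - 1) * τ' / (τ ^ 2 * (1 - s * L)) ≤ 1 / (1 - s * L) := by
      rw [div_le_div_iff₀ (by positivity) h1l]
      nlinarith [sq_nonneg τ]
    have h1 : (τ' - 1) * τ' / (τ ^ 2 * (1 - s * L)) * (1 / (s * μ) - 2 + L * s)
        ≤ (1 / (s * μ) - 2 + L * s) / (1 - s * L) := by
      have := mul_le_mul_of_nonneg_right hR hK
      calc (τ' - 1) * τ' / (τ ^ 2 * (1 - s * L)) * (1 / (s * μ) - 2 + L * s)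
          ≤ 1 / (1 - s * L) * (1 / (s * μ) - 2 + L * s) := this
        _ = (1 / (s * μ) - 2 + L * s) / (1 - s * L) := by ring
    have h2 : (1 + u + 1 / v) / (1 - s * L) = (1 + 1 / v) / (1 - s * L) + u / (1 - s * L) := by
      ring
    have h3 : u / (1 - s * L) = ε / 3 := by
      rw [hudef]; field_simp
    linarith
  have hb2 : (1 + v + w) * (τ - 1) / (μ * s * τ) ≤ auxJDl μ L s + ε := by
    have h1 : (1 + v + w) * (τ - 1) / (μ * s * τ) ≤ (1 + v + w) / (μ * s) := by
      rw [div_le_div_iff₀ (by positivity) hq]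
      nlinarith [mul_pos (by linarith : (0:ℝ) < 1 + v + w) hq]
    have h2 : (1 + v + w) / (μ * s) = (1 + v) / (μ * s) + w / (μ * s) := by ring
    have h3 : w / (μ * s) = ε / 3 := by rw [hwdef]; field_simp
    linarith
  have hb3 : (1 + 1 / w + 1 / u) / (μ * s * τ) ≤ auxJDl μ L s + ε := by
    have h1 : (1 + 1 / w + 1 / u) / (μ * s * τ) = coef * (1 / τ) := by
      rw [hcoefdef, div_mul_div_comm, mul_one]
    have h2 : coef * (1 / τ) < coef * ((1 / ((1 - s * L) * (μ * s))) / coef) :=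
      mul_lt_mul_of_pos_left hxlt hcoef
    have h3 : coef * ((1 / ((1 - s * L) * (μ * s))) / coef) = 1 / ((1 - s * L) * (μ * s)) := by
      rw [mul_comm, div_mul_cancel₀ _ hcoef.ne']
    have h4 := auxJDl_ge hμ hμL hs0 hsL
    rw [h1]
    linarith
  exact max_le (max_le hb1 hb2) hb3

end part6

set_option maxHeartbeats 2000000

theorem rho_sup_and_limit (μ L s : ℝ) (hμ : 0 < μ) (hμL : μ < L)
    (hs0 : 0 < s) (hs1 : s < 1 / L)
    (t : ℕ → ℝ) (ht1 : t 1 = 1) (htmono : ∀ k, 1 ≤ k → t k < t (k + 1))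
    (htlim : Tendsto t atTop atTop)
    (htrec : ∀ k, 1 ≤ k → t (k + 1) ^ 2 - t (k + 1) ≤ t k ^ 2)
    (ρ : ℕ → ℝ)
    (hρ : ∀ k, ρ k = 1 - 1 / min (Cseq μ L s t k) (Dseq μ L s t k))
    :
    (⨆ k, ρ k) ∈ Set.Ioo (1 - (1 - L * s) * μ * s)
        (1 - (1 - L * s) * μ * s / (1 + max (μ / L) (1 / 8))) ∧
    (⨆ k, ρ k) ∈ Set.Ioo (0 : ℝ) 1 ∧
    ∃ ρinf : ℝ, Tendsto ρ atTop (𝓝 ρinf) ∧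
      ρinf ∈ Set.Ioo (1 - (1 - L * s) * μ * s)
        (1 - (1 - L * s) * μ * s / (1 + μ / L)) ∧
      ρinf ∈ Set.Ioo (0 : ℝ) 1 := by
  have hL : 0 < L := hμ.trans hμL
  have hsL : s * L < 1 := (lt_div_iff₀ hL).mp hs1
  have h1l : 0 < 1 - s * L := by linarith
  have hq : 0 < μ * s := by positivity
  have hqlt : μ * s < s * L := by nlinarith
  -- basic facts about t
  have htau : ∀ k : ℕ, 1 ≤ t (k + 1) := by
    intro k
    induction k with
    | zero => exact le_of_eq ht1.symm
    | succ n ih => exact ih.trans (htmono (n + 1) (by omega)).le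
  have htau2 : ∀ k : ℕ, t (k + 1) ≤ t (k + 2) := fun k => (htmono (k + 1) (by omega)).le
  have hrec' : ∀ k : ℕ, t (k + 2) ^ 2 - t (k + 2) ≤ t (k + 1) ^ 2 := fun k =>
    htrec (k + 1) (by omega)
  have hx0 : Tendsto (fun k : ℕ => 1 / t (k + 1)) atTop (𝓝 0) := by
    have h1 : Tendsto (fun k : ℕ => t (k + 1)) atTop atTop :=
      htlim.comp (tendsto_add_atTop_nat 1)
    simpa [one_div, Pi.inv_def] using h1.inv_tendsto_atTop
  -- limit quantities
  have hIC : 1 / (1 - s * L) < auxICl μ L s := auxICl_gt hμ hμL hs0 hsL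
  have hIC0 : 0 < auxICl μ L s := lt_trans (by positivity) hIC
  have hJD : 1 / ((1 - s * L) * (μ * s)) ≤ auxJDl μ L s := auxJDl_ge hμ hμL hs0 hsL
  have hJD0 : 0 < auxJDl μ L s := lt_of_lt_of_le (by positivity) hJD
  have hJDlt : auxJDl μ L s + 1 < (1 + μ / L) / ((1 - s * L) * (μ * s)) :=
    auxJDl_lt hμ hμL hs0 hsL
  -- convergence of the C part
  have hFtend : Tendsto (fun k : ℕ => sInf (auxSC μ L s (t (k + 1)))) atTop
      (𝓝 (auxICl μ L s)) := by
    rw [Metric.tendsto_atTop]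
    intro ε hε
    obtain ⟨X0, hX0, hub⟩ := auxSC_inf_le hμ hμL hs0 hsL (half_pos hε)
    have hev1 : ∀ᶠ k : ℕ in atTop, 1 / t (k + 1) < X0 :=
      hx0.eventually (eventually_lt_nhds hX0)
    have hthr : (0:ℝ) < ε / (2 * (auxICl μ L s + 1)) := by positivity
    have hev2 : ∀ᶠ k : ℕ in atTop, 1 / t (k + 1) < ε / (2 * (auxICl μ L s + 1)) :=
      hx0.eventually (eventually_lt_nhds hthr)
    obtain ⟨N, hN⟩ := eventually_atTop.mp (hev1.and hev2)
    refine ⟨N, fun k hk => ?_⟩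
    obtain ⟨ha1, ha2⟩ := hN k hk
    have hle := hub (t (k + 1)) (htau k) ha1
    have hge := auxSC_inf_ge hμ hμL hs0 hsL (htau k)
    have hxnn : (0:ℝ) ≤ 1 / t (k + 1) := by
      have := htau k; positivity
    have he : (1 - 1 / t (k + 1)) * auxICl μ L s
        = auxICl μ L s - 1 / t (k + 1) * auxICl μ L s := by ring
    have hmul : 1 / t (k + 1) * auxICl μ L s
        < ε / (2 * (auxICl μ L s + 1)) * (auxICl μ L s + 1) := by
      have h1 : 1 / t (k + 1) * auxICl μ L s ≤ 1 / t (k + 1) * (auxICl μ L s + 1) := by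
        nlinarith
      have h2 : 1 / t (k + 1) * (auxICl μ L s + 1)
          < ε / (2 * (auxICl μ L s + 1)) * (auxICl μ L s + 1) :=
        mul_lt_mul_of_pos_right ha2 (by positivity)
      linarith
    have heq2 : ε / (2 * (auxICl μ L s + 1)) * (auxICl μ L s + 1) = ε / 2 := by
      field_simp
    rw [Real.dist_eq, abs_sub_lt_iff]
    constructor
    · linarith
    · rw [he] at hge; linarith
  -- convergence of the D part
  have hGtend : Tendsto (fun k : ℕ => sInf (auxSD μ L s (t (k + 1)) (t (k + 2)))) atTop
      (𝓝 (auxJDl μ L s)) := by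
    rw [Metric.tendsto_atTop]
    intro ε hε
    obtain ⟨X0, hX0, hub⟩ := auxSD_inf_le hμ hμL hs0 hsL (half_pos hε)
    have hev1 : ∀ᶠ k : ℕ in atTop, 1 / t (k + 1) < X0 :=
      hx0.eventually (eventually_lt_nhds hX0)
    have hthr : (0:ℝ) < ε / (2 * (auxJDl μ L s + 1)) := by positivity
    have hev2 : ∀ᶠ k : ℕ in atTop, 1 / t (k + 1) < ε / (2 * (auxJDl μ L s + 1)) :=
      hx0.eventually (eventually_lt_nhds hthr)
    obtain ⟨N, hN⟩ := eventually_atTop.mp (hev1.and hev2)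
    refine ⟨N, fun k hk => ?_⟩
    obtain ⟨ha1, ha2⟩ := hN k hk
    have hle := hub (t (k + 1)) (t (k + 2)) (htau k) (htau2 k) (hrec' k) ha1
    have hge := auxSD_inf_ge hμ hμL hs0 hsL (htau k) (htau2 k)
    have he : (1 - 1 / t (k + 1)) * auxJDl μ L s
        = auxJDl μ L s - 1 / t (k + 1) * auxJDl μ L s := by ring
    have hxnn : (0:ℝ) ≤ 1 / t (k + 1) := by
      have := htau k; positivity
    have hmul : 1 / t (k + 1) * auxJDl μ L s
        < ε / (2 * (auxJDl μ L s + 1)) * (auxJDl μ L s + 1) := by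
      have h1 : 1 / t (k + 1) * auxJDl μ L s ≤ 1 / t (k + 1) * (auxJDl μ L s + 1) := by
        nlinarith
      have h2 : 1 / t (k + 1) * (auxJDl μ L s + 1)
          < ε / (2 * (auxJDl μ L s + 1)) * (auxJDl μ L s + 1) :=
        mul_lt_mul_of_pos_right ha2 (by positivity)
      linarith
    have heq2 : ε / (2 * (auxJDl μ L s + 1)) * (auxJDl μ L s + 1) = ε / 2 := by
      field_simp
    rw [Real.dist_eq, abs_sub_lt_iff]
    constructor
    · linarith
    · rw [he] at hge; linarith
  -- convergence of Cseq, Dseq, min, ρ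
  have hCt : Tendsto (Cseq μ L s t) atTop (𝓝 (1 / (μ * s) * auxICl μ L s)) := by
    have hid : Cseq μ L s t = fun k => 1 / (μ * s) * sInf (auxSC μ L s (t (k + 1))) := rfl
    rw [hid]
    exact hFtend.const_mul _
  have hDt : Tendsto (Dseq μ L s t) atTop (𝓝 (auxJDl μ L s + 1)) := by
    have hid : Dseq μ L s t = fun k => sInf (auxSD μ L s (t (k + 1)) (t (k + 2))) + 1 := rfl
    rw [hid]
    exact hGtend.add tendsto_const_nhds
  have hmt : Tendsto (fun k => min (Cseq μ L s t k) (Dseq μ L s t k)) atTop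
      (𝓝 (min (1 / (μ * s) * auxICl μ L s) (auxJDl μ L s + 1))) := hCt.min hDt
  obtain ⟨m, hmdef⟩ : ∃ m : ℝ, m = min (1 / (μ * s) * auxICl μ L s) (auxJDl μ L s + 1) :=
    ⟨_, rfl⟩
  rw [← hmdef] at hmt
  -- bounds on m
  have hloC : 1 / ((1 - s * L) * (μ * s)) < 1 / (μ * s) * auxICl μ L s := by
    have h := mul_lt_mul_of_pos_left hIC (show (0:ℝ) < 1 / (μ * s) by positivity)
    have heq : 1 / (μ * s) * (1 / (1 - s * L)) = 1 / ((1 - s * L) * (μ * s)) := by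
      rw [div_mul_div_comm, one_mul, mul_comm]
    linarith
  have hm_lo : 1 / ((1 - s * L) * (μ * s)) < m := by
    rw [hmdef]; exact lt_min hloC (by linarith)
  have hm_hi : m < (1 + μ / L) / ((1 - s * L) * (μ * s)) := by
    rw [hmdef]; exact (min_le_right _ _).trans_lt hJDlt
  have hlo_pos : (0:ℝ) < 1 / ((1 - s * L) * (μ * s)) := by positivity
  have hm0 : 0 < m := lt_trans hlo_pos hm_lo
  have hρeq : ρ = fun k => 1 - 1 / min (Cseq μ L s t k) (Dseq μ L s t k) := funext hρ
  have hρt : Tendsto ρ atTop (𝓝 (1 - 1 / m)) := by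
    rw [hρeq]
    exact tendsto_const_nhds.sub (tendsto_const_nhds.div hmt hm0.ne')
  -- ρ∞ bounds
  have hA : (1 - L * s) * μ * s = (1 - s * L) * (μ * s) := by ring
  have hA0 : (0:ℝ) < (1 - L * s) * μ * s := by rw [hA]; positivity
  have hA1 : (1 - L * s) * μ * s < 1 := by nlinarith
  have hrl_lo : 1 - (1 - L * s) * μ * s < 1 - 1 / m := by
    have h1 : 1 / m < (1 - s * L) * (μ * s) := by
      rw [div_lt_iff₀ hm0]
      have h2 : 1 / ((1 - s * L) * (μ * s)) * ((1 - s * L) * (μ * s)) = 1 :=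
        div_mul_cancel₀ 1 (by positivity)
      nlinarith [mul_lt_mul_of_pos_right hm_lo (show (0:ℝ) < (1 - s * L) * (μ * s) by positivity)]
    rw [hA]
    linarith
  have h1c : (0:ℝ) < 1 + μ / L := by positivity
  have hrl_hi : 1 - 1 / m < 1 - (1 - L * s) * μ * s / (1 + μ / L) := by
    have h1 : (1 - s * L) * (μ * s) / (1 + μ / L) < 1 / m := by
      rw [div_lt_div_iff₀ h1c hm0]
      have h2 := (lt_div_iff₀ (show (0:ℝ) < (1 - s * L) * (μ * s) by positivity)).mp hm_hi
      have h3 : (1 - s * L) * (μ * s) * m = m * ((1 - s * L) * (μ * s)) := by ring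
      linarith
    have he : (1 - L * s) * μ * s / (1 + μ / L) = (1 - s * L) * (μ * s) / (1 + μ / L) := by
      rw [hA]
    linarith [he ▸ h1]
  -- per-k bounds
  have hMc : μ / L ≤ max (μ / L) (1 / 8) := le_max_left _ _
  have hM0 : (0:ℝ) < 1 + max (μ / L) (1 / 8) := by
    have : (0:ℝ) < μ / L := by positivity
    have := le_max_left (μ / L) (1 / 8)
    linarith
  have hmk_pos : ∀ k, 0 < min (Cseq μ L s t k) (Dseq μ L s t k) := by
    intro k
    apply lt_min
    · have h1 := auxSC_inf_ge_sL hμ hμL hs0 (htau k)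
      have h2 : (0:ℝ) < 1 / (μ * s) * (s * L) := by positivity
      have h3 : 1 / (μ * s) * (s * L) ≤ 1 / (μ * s) * sInf (auxSC μ L s (t (k + 1))) :=
        mul_le_mul_of_nonneg_left h1 (by positivity)
      have hid : Cseq μ L s t k = 1 / (μ * s) * sInf (auxSC μ L s (t (k + 1))) := rfl
      rw [hid]
      linarith
    · have h1 := auxSD_inf_ge0 hμ hs0 (hτ := htau k) (L := L) (τ' := t (k + 2))
      have hid : Dseq μ L s t k = sInf (auxSD μ L s (t (k + 1)) (t (k + 2))) + 1 := rfl
      rw [hid]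
      linarith
  have hperk : ∀ k, ρ k < 1 - (1 - L * s) * μ * s / (1 + max (μ / L) (1 / 8)) := by
    intro k
    have h1 := auxSC_inf_lt hμ hμL hs0 hsL (htau k)
    have hCk : Cseq μ L s t k
        < (1 + max (μ / L) (1 / 8)) / ((1 - s * L) * (μ * s)) := by
      have h2 := mul_lt_mul_of_pos_left h1 (show (0:ℝ) < 1 / (μ * s) by positivity)
      have heq : 1 / (μ * s) * ((1 + max (μ / L) (1 / 8)) / (1 - s * L))
          = (1 + max (μ / L) (1 / 8)) / ((1 - s * L) * (μ * s)) := by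
        rw [div_mul_div_comm, one_mul, mul_comm]
      have hid : Cseq μ L s t k = 1 / (μ * s) * sInf (auxSC μ L s (t (k + 1))) := rfl
      rw [hid]
      linarith
    have hmin_lt : min (Cseq μ L s t k) (Dseq μ L s t k)
        < (1 + max (μ / L) (1 / 8)) / ((1 - s * L) * (μ * s)) :=
      (min_le_left _ _).trans_lt hCk
    have hinv := one_div_lt_one_div_of_lt (hmk_pos k) hmin_lt
    have hid2 : 1 / ((1 + max (μ / L) (1 / 8)) / ((1 - s * L) * (μ * s)))
        = (1 - s * L) * (μ * s) / (1 + max (μ / L) (1 / 8)) := one_div_div _ _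
    have hid3 : (1 - L * s) * μ * s / (1 + max (μ / L) (1 / 8))
        = (1 - s * L) * (μ * s) / (1 + max (μ / L) (1 / 8)) := by rw [hA]
    rw [hρ k, hid3]
    rw [hid2] at hinv
    linarith
  -- boundedness of ρ
  have hbdd : BddAbove (Set.range ρ) := by
    refine ⟨1, ?_⟩
    rintro _ ⟨k, rfl⟩
    rw [hρ k]
    have h1 : 0 < 1 / min (Cseq μ L s t k) (Dseq μ L s t k) := by
      have := hmk_pos k; positivity
    linarith
  -- sup lower bound
  have hsup_lo : 1 - (1 - L * s) * μ * s < ⨆ k, ρ k := by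
    obtain ⟨k0, hk0⟩ := (hρt.eventually (eventually_gt_nhds hrl_lo)).exists
    exact hk0.trans_le (le_ciSup hbdd k0)
  -- sup upper bound
  have hile : 1 - (1 - L * s) * μ * s / (1 + μ / L)
      ≤ 1 - (1 - L * s) * μ * s / (1 + max (μ / L) (1 / 8)) := by
    have h1 : (1 - L * s) * μ * s / (1 + max (μ / L) (1 / 8))
        ≤ (1 - L * s) * μ * s / (1 + μ / L) :=
      div_le_div_of_nonneg_left hA0.le h1c (by linarith)
    linarith
  have hrl_S : 1 - 1 / m < 1 - (1 - L * s) * μ * s / (1 + max (μ / L) (1 / 8)) :=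
    lt_of_lt_of_le hrl_hi hile
  have hsup_hi : (⨆ k, ρ k) < 1 - (1 - L * s) * μ * s / (1 + max (μ / L) (1 / 8)) := by
    obtain ⟨N, hN⟩ := eventually_atTop.mp (hρt.eventually (eventually_lt_nhds
      (show 1 - 1 / m < ((1 - 1 / m) + (1 - (1 - L * s) * μ * s / (1 + max (μ / L) (1 / 8)))) / 2
        by linarith)))
    have hne : (Finset.range (N + 1)).Nonempty := ⟨0, by simp⟩
    have hB : (Finset.range (N + 1)).sup' hne ρ
        < 1 - (1 - L * s) * μ * s / (1 + max (μ / L) (1 / 8)) :=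
      (Finset.sup'_lt_iff hne).mpr fun k _ => hperk k
    apply lt_of_le_of_lt (ciSup_le fun k => ?_)
      (max_lt hB (show ((1 - 1 / m) + (1 - (1 - L * s) * μ * s / (1 + max (μ / L) (1 / 8)))) / 2
        < 1 - (1 - L * s) * μ * s / (1 + max (μ / L) (1 / 8)) by linarith))
    rcases le_or_gt k N with h | h
    · exact le_trans (Finset.le_sup' ρ (Finset.mem_range.mpr (by omega))) (le_max_left _ _)
    · exact le_trans (hN k h.le).le (le_max_right _ _)
  -- endpoints inside (0,1)
  have hend0 : (0:ℝ) < 1 - (1 - L * s) * μ * s := by linarith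
  have hend1 : 1 - (1 - L * s) * μ * s / (1 + max (μ / L) (1 / 8)) < 1 := by
    have : 0 < (1 - L * s) * μ * s / (1 + max (μ / L) (1 / 8)) := by
      exact div_pos hA0 hM0
    linarith
  have hend1' : 1 - (1 - L * s) * μ * s / (1 + μ / L) < 1 := by
    have : 0 < (1 - L * s) * μ * s / (1 + μ / L) := div_pos hA0 h1c
    linarith
  refine ⟨⟨hsup_lo, hsup_hi⟩, ⟨lt_trans hend0 hsup_lo, lt_trans hsup_hi hend1⟩,
    1 - 1 / m, hρt, ⟨hrl_lo, hrl_hi⟩, ⟨lt_trans hend0 hrl_lo, lt_trans hrl_hi hend1'⟩⟩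
end

section
/- Let 0 < μ < L, s ∈ (0, 1/L), and let {t_k} satisfy the Nesterov rule. Then the sequence {C_k} satisfies C_0 = 1/(μs) and 1/(μs) < C_k < 3/((1 - Ls)μs) for all k ≥ 1. -/
open Filter Finset
open scoped RealInnerProductSpace Topology

/-- The generic set, parametrized by `T = t (k+1)`. -/
def SS (μ L s T : ℝ) : Set ℝ :=
  { z : ℝ | ∃ a b : ℝ, 0 < a ∧ 0 < b ∧
      z = max (max ((T - 1) * (1 + μ / a) / (T * (1 - s * L)))
        ((1 + b) * (T - 1) / T + s * (a + L)))
        ((1 + 1 / b) / T) }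

lemma comb_le_max (B C l : ℝ) (h0 : 0 ≤ l) (h1 : l ≤ 1) :
    l * B + (1 - l) * C ≤ max B C := by
  nlinarith [mul_nonneg h0 (sub_nonneg.2 (le_max_left B C)),
    mul_nonneg (sub_nonneg.2 h1) (sub_nonneg.2 (le_max_right B C))]

lemma SS_nonempty (μ L s T : ℝ) : (SS μ L s T).Nonempty :=
  ⟨_, 1, 1, one_pos, one_pos, rfl⟩

lemma SS_bddBelow (μ L s T : ℝ) (hT : 0 < T) : BddBelow (SS μ L s T) := by
  refine ⟨0, ?_⟩
  rintro z ⟨a, b, ha, hb, rfl⟩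
  have h1 : (0:ℝ) ≤ (1 + 1 / b) / T := by positivity
  exact le_trans h1 (le_max_right _ _)

lemma sInf_SS_one (μ L s : ℝ) (hμ : 0 < μ) (hL : 0 < L) (hs0 : 0 < s)
    (h1sL : 0 < 1 - s * L) : sInf (SS μ L s 1) = 1 := by
  refine le_antisymm ?_ ?_
  · rw [Real.sInf_le_iff (SS_bddBelow μ L s 1 one_pos) (SS_nonempty μ L s 1)]
    intro ε hε
    refine ⟨_, ⟨(1 - s * L) / (2 * s), 2 / ε, by positivity, by positivity, rfl⟩, ?_⟩
    apply max_lt (max_lt ?_ ?_) ?_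
    · have : ((1:ℝ) - 1) * (1 + μ / ((1 - s * L) / (2 * s))) / (1 * (1 - s * L)) = 0 := by
        ring
      rw [this]; linarith
    · have h2 : s * ((1 - s * L) / (2 * s) + L) = (1 + s * L) / 2 := by
        field_simp; ring
      have h3 : ((1:ℝ) + 2 / ε) * (1 - 1) / 1 = 0 := by ring
      rw [h3, h2]
      have : 0 < s * L := by positivity
      linarith
    · have h4 : ((1:ℝ) + 1 / (2 / ε)) / 1 = 1 + ε / 2 := by
        rw [one_div_div, div_one]
      rw [h4]; linarith
  · apply le_csInf (SS_nonempty μ L s 1)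
    rintro z ⟨a, b, ha, hb, rfl⟩
    have h1 : (1:ℝ) ≤ (1 + 1 / b) / 1 := by
      rw [div_one]
      have : 0 < 1 / b := by positivity
      linarith
    exact le_trans h1 (le_max_right _ _)

lemma sInf_SS_lower (μ L s T : ℝ) (hμ : 0 < μ) (hL : 0 < L) (hs0 : 0 < s)
    (h1sL : 0 < 1 - s * L) (hT : 1 < T) : 1 < sInf (SS μ L s T) := by
  have hT0 : 0 < T := by linarith
  set ε := min 1 (s * L * (T - 1) / (2 * T)) with hεdef
  have hεpos : 0 < ε := lt_min one_pos (div_pos (mul_pos (mul_pos hs0 hL) (by linarith)) (by linarith))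
  have hε1 : ε ≤ 1 := min_le_left _ _
  have hε2 : ε * (2 * T) ≤ s * L * (T - 1) :=
    (le_div_iff₀ (by positivity)).mp (min_le_right _ _)
  have hstep : 1 + ε ≤ sInf (SS μ L s T) := by
    apply le_csInf (SS_nonempty μ L s T)
    rintro z ⟨a, b, ha, hb, rfl⟩
    have hsal : 0 < s * (a + L) := by positivity
    rcases le_or_gt ((1 + ε) * T) ((1 + b) * (T - 1)) with h | h
    · have hB : (1 + ε) ≤ (1 + b) * (T - 1) / T := (le_div_iff₀ hT0).2 h
      have : (1 + ε) ≤ (1 + b) * (T - 1) / T + s * (a + L) := by linarith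
      exact le_trans this (le_trans (le_max_right _ _) (le_max_left _ _))
    · have hu : (0:ℝ) < 1 + b := by linarith
      have hl0 : (0:ℝ) ≤ 1 / (1 + b) := by positivity
      have hl1 : 1 / (1 + b) ≤ 1 := by rw [div_le_one hu]; linarith
      have hcomb := comb_le_max ((1 + b) * (T - 1) / T + s * (a + L)) ((1 + 1 / b) / T)
        (1 / (1 + b)) hl0 hl1
      have hb' : b ≠ 0 := ne_of_gt hb
      have hT' : T ≠ 0 := ne_of_gt hT0
      have hu' : (1:ℝ) + b ≠ 0 := ne_of_gt hu
      have heq : (1 / (1 + b)) * ((1 + b) * (T - 1) / T + s * (a + L)) +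
          (1 - 1 / (1 + b)) * ((1 + 1 / b) / T) = 1 + s * (a + L) / (1 + b) := by
        field_simp
        ring
      have hkey : ε * (1 + b) ≤ s * (a + L) := by
        nlinarith [mul_lt_mul_of_pos_left h hεpos, mul_pos hs0 ha,
          mul_pos (mul_pos hs0 hL) (sub_pos.2 hT), sub_pos.2 hT]
      have hdiv : ε ≤ s * (a + L) / (1 + b) := (le_div_iff₀ hu).2 hkey
      have hmax : max ((1 + b) * (T - 1) / T + s * (a + L)) ((1 + 1 / b) / T) ≤
          max (max ((T - 1) * (1 + μ / a) / (T * (1 - s * L)))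
            ((1 + b) * (T - 1) / T + s * (a + L))) ((1 + 1 / b) / T) :=
        max_le_max (le_max_right _ _) le_rfl
      rw [heq] at hcomb
      linarith
  linarith

lemma sInf_SS_upper (μ L s T : ℝ) (hμ : 0 < μ) (hμL : μ < L) (hs0 : 0 < s)
    (h1sL : 0 < 1 - s * L) (hT : 1 < T) : sInf (SS μ L s T) < 3 / (1 - s * L) := by
  have hL : 0 < L := hμ.trans hμL
  have hT0 : 0 < T := by linarith
  have hmem : (max (max ((T - 1) * (1 + μ / μ) / (T * (1 - s * L)))
      ((1 + 1) * (T - 1) / T + s * (μ + L))) ((1 + 1 / 1) / T)) ∈ SS μ L s T :=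
    ⟨μ, 1, hμ, one_pos, rfl⟩
  have hle := csInf_le (SS_bddBelow μ L s T hT0) hmem
  have hlt : (max (max ((T - 1) * (1 + μ / μ) / (T * (1 - s * L)))
      ((1 + 1) * (T - 1) / T + s * (μ + L))) ((1 + 1 / 1) / T)) < 3 / (1 - s * L) := by
    apply max_lt (max_lt ?_ ?_) ?_
    · rw [div_self (ne_of_gt hμ), div_lt_div_iff₀ (by positivity) h1sL]
      nlinarith [mul_pos h1sL (show (0:ℝ) < T + 2 by linarith)]
    · have hq : (1 + 1) * (T - 1) / T < 2 := by
        rw [div_lt_iff₀ hT0]; linarith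
      have h2 : 2 + s * (μ + L) ≤ 3 / (1 - s * L) := by
        rw [le_div_iff₀ h1sL]
        nlinarith [mul_pos hs0 (sub_pos.2 hμL),
          mul_nonneg (mul_nonneg (mul_nonneg hs0.le hs0.le) hL.le)
            (show (0:ℝ) ≤ μ + L by linarith)]
      linarith
    · have hC : ((1:ℝ) + 1 / 1) / T ≤ 2 := by
        rw [div_le_iff₀ hT0]; norm_num; linarith
      have h3 : (3:ℝ) ≤ 3 / (1 - s * L) := by
        rw [le_div_iff₀ h1sL]
        nlinarith [mul_pos hs0 hL]
      linarith
  linarith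

theorem Cseq_bounds (μ L s : ℝ) (hμ : 0 < μ) (hμL : μ < L)
    (hs0 : 0 < s) (hs1 : s < 1 / L)
    (t : ℕ → ℝ) (ht1 : t 1 = 1) (htmono : ∀ k, 1 ≤ k → t k < t (k + 1))
    (htlim : Tendsto t atTop atTop)
    (htrec : ∀ k, 1 ≤ k → t (k + 1) ^ 2 - t (k + 1) ≤ t k ^ 2)
    :
    Cseq μ L s t 0 = 1 / (μ * s) ∧
    ∀ k, 1 ≤ k → 1 / (μ * s) < Cseq μ L s t k ∧
      Cseq μ L s t k < 3 / ((1 - L * s) * μ * s) := by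
  have hL : 0 < L := hμ.trans hμL
  have hsL : s * L < 1 := by
    have := (lt_div_iff₀ hL).mp hs1; linarith
  have h1sL : 0 < 1 - s * L := by linarith
  have hμs : 0 < μ * s := mul_pos hμ hs0
  have hCseq : ∀ k, Cseq μ L s t k = (1 / (μ * s)) * sInf (SS μ L s (t (k + 1))) :=
    fun k => rfl
  have htge : ∀ k, 1 ≤ k → 1 ≤ t k := by
    intro k hk
    induction k, hk using Nat.le_induction with
    | base => rw [ht1]
    | succ n hn ih => have := htmono n hn; linarith
  have hT : ∀ k, 1 ≤ k → 1 < t (k + 1) := fun k hk =>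
    lt_of_le_of_lt (htge k hk) (htmono k hk)
  constructor
  · rw [hCseq 0, zero_add, ht1, sInf_SS_one μ L s hμ hL hs0 h1sL, mul_one]
  · intro k hk
    have hTk := hT k hk
    constructor
    · rw [hCseq k]
      have hlow := sInf_SS_lower μ L s (t (k + 1)) hμ hL hs0 h1sL hTk
      nlinarith [mul_lt_mul_of_pos_left hlow (show (0:ℝ) < 1 / (μ * s) by positivity)]
    · rw [hCseq k]
      have hup := sInf_SS_upper μ L s (t (k + 1)) hμ hμL hs0 h1sL hTk
      have h2 := mul_lt_mul_of_pos_left hup (show (0:ℝ) < 1 / (μ * s) by positivity)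
      have h3 : 1 / (μ * s) * (3 / (1 - s * L)) = 3 / ((1 - L * s) * μ * s) := by
        rw [mul_comm L s]
        field_simp
      linarith
end

section
/- Let 0 < μ < L, s ∈ (0, 1/L), and let {t_k} satisfy the Nesterov rule. Then the sequence {C_k} is monotonically increasing: C_k ≤ C_{k+1} for all k ≥ 0. -/
open Filter Finset
open scoped RealInnerProductSpace Topology

set_option maxHeartbeats 2000000 in
theorem Cseq_monotone (μ L s : ℝ) (hμ : 0 < μ) (hμL : μ < L)
    (hs0 : 0 < s) (hs1 : s < 1 / L)
    (t : ℕ → ℝ) (ht1 : t 1 = 1) (htmono : ∀ k, 1 ≤ k → t k < t (k + 1))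
    (htlim : Tendsto t atTop atTop)
    (htrec : ∀ k, 1 ≤ k → t (k + 1) ^ 2 - t (k + 1) ≤ t k ^ 2)
    :
    ∀ k, Cseq μ L s t k ≤ Cseq μ L s t (k + 1) := by
  intro k
  have hL : 0 < L := hμ.trans hμL
  have hsL : s * L < 1 := by
    have := (lt_div_iff₀ hL).mp hs1
    linarith
  have htpos : ∀ n : ℕ, 1 ≤ t (n + 1) := by
    intro n
    induction n with
    | zero => exact ht1.ge
    | succ m ih => exact ih.trans (htmono (m + 1) (Nat.le_add_left 1 m)).le
  have h1t1 : 1 ≤ t (k + 1) := htpos k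
  have h12 : t (k + 1) < t (k + 1 + 1) := htmono (k + 1) (Nat.le_add_left 1 k)
  have ht1pos : (0 : ℝ) < t (k + 1) := by linarith
  have ht2pos : (0 : ℝ) < t (k + 1 + 1) := by linarith
  have h1t2 : (1 : ℝ) < t (k + 1 + 1) := by linarith
  unfold Cseq
  have hμs : (0 : ℝ) < 1 / (μ * s) := by positivity
  refine mul_le_mul_of_nonneg_left ?_ hμs.le
  set t1 := t (k + 1) with ht1def
  set t2 := t (k + 1 + 1) with ht2def
  clear_value t1 t2
  have hbdd : BddBelow { z : ℝ | ∃ a b : ℝ, 0 < a ∧ 0 < b ∧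
      z = max (max ((t1 - 1) * (1 + μ / a) / (t1 * (1 - s * L)))
        ((1 + b) * (t1 - 1) / t1 + s * (a + L)))
        ((1 + 1 / b) / t1) } := by
    refine ⟨0, ?_⟩
    rintro z ⟨a, b, ha, hb, rfl⟩
    have h0 : (0 : ℝ) ≤ (1 + 1 / b) / t1 := by positivity
    exact h0.trans (le_max_right _ _)
  refine le_csInf ⟨_, 1, 1, one_pos, one_pos, rfl⟩ ?_
  rintro z' ⟨a, b, ha, hb, rfl⟩
  set K := s * (a + L) with hKdef
  have hK : 0 < K := by positivity
  set z' := max (max ((t2 - 1) * (1 + μ / a) / (t2 * (1 - s * L)))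
      ((1 + b) * (t2 - 1) / t2 + K)) ((1 + 1 / b) / t2) with hz'def
  have hA' : (t2 - 1) * (1 + μ / a) / (t2 * (1 - s * L)) ≤ z' :=
    le_trans (le_max_left _ _) (le_max_left _ _)
  have hB' : (1 + b) * (t2 - 1) / t2 + K ≤ z' :=
    le_trans (le_max_right _ _) (le_max_left _ _)
  have hC' : (1 + 1 / b) / t2 ≤ z' := le_max_right _ _
  clear_value K z'
  -- cleared-denominator versions
  have hB2 : (1 + b) * (t2 - 1) + K * t2 ≤ z' * t2 := by
    have h := mul_le_mul_of_nonneg_right hB' ht2pos.le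
    rw [add_mul, div_mul_cancel₀ _ ht2pos.ne'] at h
    linarith
  have hC2 : 1 + 1 / b ≤ z' * t2 := by
    rwa [div_le_iff₀ ht2pos] at hC'
  have hC3 : b + 1 ≤ z' * t2 * b := by
    have h := mul_le_mul_of_nonneg_right hC2 hb.le
    have h2 : (1 + 1 / b) * b = b + 1 := by field_simp
    linarith [h2 ▸ h]
  have hzK : K < z' := by
    nlinarith [mul_pos (show (0:ℝ) < 1 + b by linarith) (show (0:ℝ) < t2 - 1 by linarith)]
  -- (z'-K)(z'-1) ≥ K(t2-1)/t2 in cleared form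
  have hUW : t2 - 1 ≤ (z' * t2 - (t2 - 1) - K * t2) * (z' * t2 - 1) := by
    have h1 : b * (t2 - 1) ≤ z' * t2 - (t2 - 1) - K * t2 := by nlinarith
    have h2 : 1 ≤ b * (z' * t2 - 1) := by nlinarith
    have h3 : 0 ≤ b * (t2 - 1) := by nlinarith
    have h4 : b * (t2 - 1) * 1 ≤ (z' * t2 - (t2 - 1) - K * t2) * (b * (z' * t2 - 1)) :=
      mul_le_mul h1 h2 zero_le_one (by linarith)
    have h5 : b * (t2 - 1) ≤ b * ((z' * t2 - (t2 - 1) - K * t2) * (z' * t2 - 1)) := by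
      nlinarith [h4]
    exact (mul_le_mul_iff_right₀ hb).mp h5
  have hG : K * (t2 - 1) ≤ (z' - K) * (z' - 1) * t2 := by
    have hident : (z' * t2 - (t2 - 1) - K * t2) * (z' * t2 - 1) - (t2 - 1)
        = t2 * ((z' - K) * (z' - 1) * t2 - K * (t2 - 1)) := by ring
    have h : 0 ≤ t2 * ((z' - K) * (z' - 1) * t2 - K * (t2 - 1)) := by
      rw [← hident]; linarith
    nlinarith [h, ht2pos]
  have hz1 : 1 < z' := by
    nlinarith [mul_pos hK (show (0:ℝ) < t2 - 1 by linarith)]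
  have hF : K * (t1 - 1) ≤ (z' - K) * (z' - 1) * t1 := by
    nlinarith [mul_le_mul_of_nonneg_right hG ht1pos.le,
      mul_pos hK (show (0:ℝ) < t2 - t1 by linarith), ht2pos]
  have hd : 0 < t1 * z' - 1 := by nlinarith
  have hdinv : (t1 * z' - 1) * (1 / (t1 * z' - 1)) = 1 := mul_one_div_cancel hd.ne'
  -- the candidate element in the lower set
  have hmem : max (max ((t1 - 1) * (1 + μ / a) / (t1 * (1 - s * L)))
        ((1 + 1 / (t1 * z' - 1)) * (t1 - 1) / t1 + s * (a + L)))
        ((1 + 1 / (1 / (t1 * z' - 1))) / t1) ∈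
      { z : ℝ | ∃ a b : ℝ, 0 < a ∧ 0 < b ∧
        z = max (max ((t1 - 1) * (1 + μ / a) / (t1 * (1 - s * L)))
          ((1 + b) * (t1 - 1) / t1 + s * (a + L)))
          ((1 + 1 / b) / t1) } :=
    ⟨a, 1 / (t1 * z' - 1), ha, by positivity, rfl⟩
  refine le_trans (csInf_le hbdd hmem) ?_
  have hA : (t1 - 1) * (1 + μ / a) / (t1 * (1 - s * L)) ≤ z' := by
    refine le_trans ?_ hA'
    rw [div_le_div_iff₀ (by nlinarith) (by nlinarith)]
    have hμa : (0:ℝ) < μ / a := div_pos hμ ha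
    nlinarith [mul_nonneg (mul_nonneg (show (0:ℝ) ≤ 1 + μ / a by linarith)
      (show (0:ℝ) ≤ 1 - s * L by linarith)) (show (0:ℝ) ≤ t2 - t1 by linarith)]
  have hB : (1 + 1 / (t1 * z' - 1)) * (t1 - 1) / t1 + s * (a + L) ≤ z' := by
    rw [← hKdef, div_add' _ _ _ ht1pos.ne', div_le_iff₀ ht1pos]
    nlinarith [hF, hd, hdinv, ht1pos, mul_pos hd hd]
  have hC : (1 + 1 / (1 / (t1 * z' - 1))) / t1 ≤ z' := by
    rw [div_le_iff₀ ht1pos, one_div_one_div]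
    linarith
  exact max_le (max_le hA hB) hC
end

section
/- Let 0 < μ < L, s ∈ (0, 1/L), and let {t_k} satisfy the Nesterov rule. Then the sequence {D_k} satisfies D_0 ≥ 1 + 1/(μs), D_k ≥ 1 + 1/(1 - Ls) for all k ≥ 0, and D_k < 3/((1 - sL)μs) for all k ≥ 0. -/
open Filter Finset
open scoped RealInnerProductSpace Topology

theorem Dseq_bounds (μ L s : ℝ) (hμ : 0 < μ) (hμL : μ < L)
    (hs0 : 0 < s) (hs1 : s < 1 / L)
    (t : ℕ → ℝ) (ht1 : t 1 = 1) (htmono : ∀ k, 1 ≤ k → t k < t (k + 1))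
    (htlim : Tendsto t atTop atTop)
    (htrec : ∀ k, 1 ≤ k → t (k + 1) ^ 2 - t (k + 1) ≤ t k ^ 2)
    :
    1 + 1 / (μ * s) ≤ Dseq μ L s t 0 ∧
    (∀ k, 1 + 1 / (1 - L * s) ≤ Dseq μ L s t k) ∧
    (∀ k, Dseq μ L s t k < 3 / ((1 - s * L) * μ * s)) := by
  have hL : 0 < L := hμ.trans hμL
  have hsL : s * L < 1 := (lt_div_iff₀ hL).mp hs1
  have hA : 0 < 1 - s * L := by linarith
  have hμs : 0 < μ * s := mul_pos hμ hs0
  have hμs1 : μ * s < 1 := by nlinarith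
  have ht_ge : ∀ n, 1 ≤ n → 1 ≤ t n := by
    intro n hn
    induction n, hn using Nat.le_induction with
    | base => exact ht1.ge
    | succ m hm ih => exact ih.trans (htmono m hm).le
  have hC : 0 ≤ 1 / (s * μ) - 2 + L * s := by
    have hx : 0 < 1 / (s * μ) := by positivity
    have h1 : (s * μ) * (1 / (s * μ)) = 1 := by field_simp
    nlinarith [sq_nonneg (1 - s * L), mul_pos hs0 hL,
      mul_le_mul_of_nonneg_left (show s * μ ≤ s * L by nlinarith) hx.le]
  -- generic lower bound for members of the set
  have hlb : ∀ k z, (∃ u v w : ℝ, 0 < u ∧ 0 < v ∧ 0 < w ∧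
      z = max (max ((t (k + 2) - 1) * t (k + 2) / (t (k + 1) ^ 2 * (1 - s * L)) *
            (1 / (s * μ) - 2 + L * s) + (1 + u + 1 / v) / (1 - s * L))
          ((1 + v + w) * (t (k + 1) - 1) / (μ * s * t (k + 1))))
          ((1 + 1 / w + 1 / u) / (μ * s * t (k + 1)))) → 1 / (1 - s * L) ≤ z := by
    rintro k z ⟨u, v, w, hu, hv, hw, rfl⟩
    have htk1 : 1 ≤ t (k + 1) := ht_ge _ (by omega)
    have htk2 : 1 ≤ t (k + 2) := ht_ge _ (by omega)
    have hRC : 0 ≤ (t (k + 2) - 1) * t (k + 2) / (t (k + 1) ^ 2 * (1 - s * L)) *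
        (1 / (s * μ) - 2 + L * s) := by
      apply mul_nonneg (div_nonneg (by nlinarith) ?_) hC
      exact mul_nonneg (sq_nonneg _) hA.le
    have hv' : 0 < 1 / v := by positivity
    have h2 : 1 / (1 - s * L) ≤ (1 + u + 1 / v) / (1 - s * L) := by
      gcongr
      linarith
    refine le_trans ?_ ((le_max_left _ _).trans (le_max_left _ _))
    linarith
  -- k = 0 special lower bound
  have hlb0 : ∀ z, (∃ u v w : ℝ, 0 < u ∧ 0 < v ∧ 0 < w ∧
      z = max (max ((t (0 + 2) - 1) * t (0 + 2) / (t (0 + 1) ^ 2 * (1 - s * L)) *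
            (1 / (s * μ) - 2 + L * s) + (1 + u + 1 / v) / (1 - s * L))
          ((1 + v + w) * (t (0 + 1) - 1) / (μ * s * t (0 + 1))))
          ((1 + 1 / w + 1 / u) / (μ * s * t (0 + 1)))) → 1 / (μ * s) ≤ z := by
    rintro z ⟨u, v, w, hu, hv, hw, rfl⟩
    have hw' : 0 < 1 / w := by positivity
    have hu' : 0 < 1 / u := by positivity
    have h3 : 1 / (μ * s) ≤ (1 + 1 / w + 1 / u) / (μ * s * t (0 + 1)) := by
      rw [show (0 : ℕ) + 1 = 1 from rfl, ht1, mul_one]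
      gcongr
      linarith
    exact h3.trans (le_max_right _ _)
  -- member with small value
  have hub : ∀ k, ∃ z, (∃ u v w : ℝ, 0 < u ∧ 0 < v ∧ 0 < w ∧
      z = max (max ((t (k + 2) - 1) * t (k + 2) / (t (k + 1) ^ 2 * (1 - s * L)) *
            (1 / (s * μ) - 2 + L * s) + (1 + u + 1 / v) / (1 - s * L))
          ((1 + v + w) * (t (k + 1) - 1) / (μ * s * t (k + 1))))
          ((1 + 1 / w + 1 / u) / (μ * s * t (k + 1)))) ∧
      z < 3 / ((1 - s * L) * μ * s) - 1 := by
    intro k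
    have htk1 : 1 ≤ t (k + 1) := ht_ge _ (by omega)
    have htk2 : 1 ≤ t (k + 2) := ht_ge _ (by omega)
    have htp : 0 < t (k + 1) := by linarith
    have hQle : (t (k + 2) - 1) * t (k + 2) ≤ t (k + 1) ^ 2 := by
      nlinarith [htrec (k + 1) (by omega)]
    have hD : 0 < (1 - s * L) * μ * s := mul_pos (mul_pos hA hμ) hs0
    have hBkey : 3 / (μ * s) + 1 < 3 / ((1 - s * L) * μ * s) := by
      rw [lt_div_iff₀ hD]
      have hid : (3 / (μ * s) + 1) * ((1 - s * L) * μ * s)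
          = 3 * (1 - s * L) + (1 - s * L) * (μ * s) := by
        field_simp
      rw [hid]
      nlinarith [mul_lt_mul_of_pos_left hμL hs0, mul_pos (mul_pos hs0 hL) hμs]
    have hE1 : (t (k + 2) - 1) * t (k + 2) / (t (k + 1) ^ 2 * (1 - s * L)) *
        (1 / (s * μ) - 2 + L * s) + (1 + 1 + 1 / 1) / (1 - s * L)
        < 3 / ((1 - s * L) * μ * s) - 1 := by
      have hden : 0 < t (k + 1) ^ 2 * (1 - s * L) := mul_pos (by positivity) hA
      have hR : (t (k + 2) - 1) * t (k + 2) / (t (k + 1) ^ 2 * (1 - s * L))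
          ≤ 1 / (1 - s * L) := by
        rw [div_le_div_iff₀ hden hA]
        nlinarith [mul_le_mul_of_nonneg_right hQle hA.le]
      have hRC := mul_le_mul_of_nonneg_right hR hC
      have hfin : 1 / (1 - s * L) * (1 / (s * μ) - 2 + L * s) + (1 + 1 + 1 / 1) / (1 - s * L)
          < 3 / ((1 - s * L) * μ * s) - 1 := by
        rw [lt_sub_iff_add_lt, lt_div_iff₀ hD]
        have hid : (1 / (1 - s * L) * (1 / (s * μ) - 2 + L * s)
            + (1 + 1 + 1 / 1) / (1 - s * L) + 1) * ((1 - s * L) * μ * s)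
            = 1 + 2 * (μ * s) := by
          field_simp
          ring
        rw [hid]
        linarith
      linarith
    have hE2 : (1 + 1 + 1) * (t (k + 1) - 1) / (μ * s * t (k + 1))
        < 3 / ((1 - s * L) * μ * s) - 1 := by
      have h1 : (1 + 1 + 1) * (t (k + 1) - 1) / (μ * s * t (k + 1)) ≤ 3 / (μ * s) := by
        rw [div_le_div_iff₀ (mul_pos hμs htp) hμs]
        nlinarith
      linarith
    have hE3 : (1 + 1 / 1 + 1 / 1) / (μ * s * t (k + 1))
        < 3 / ((1 - s * L) * μ * s) - 1 := by
      have h1 : (1 + 1 / 1 + 1 / 1) / (μ * s * t (k + 1)) ≤ 3 / (μ * s) := by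
        rw [div_le_div_iff₀ (mul_pos hμs htp) hμs]
        nlinarith
      linarith
    exact ⟨_, ⟨1, 1, 1, one_pos, one_pos, one_pos, rfl⟩,
      max_lt (max_lt hE1 hE2) hE3⟩
  simp only [Dseq]
  refine ⟨?_, ?_, ?_⟩
  · obtain ⟨z, hz, -⟩ := hub 0
    have h := le_csInf ⟨z, hz⟩ (fun y hy => hlb0 y hy)
    exact le_trans (by linarith) (add_le_add_left h 1)
  · intro k
    obtain ⟨z, hz, -⟩ := hub k
    have h := le_csInf ⟨z, hz⟩ (fun y hy => hlb k y hy)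
    have he : 1 / (1 - L * s) = 1 / (1 - s * L) := by rw [mul_comm]
    rw [he]
    exact le_trans (by linarith) (add_le_add_left h 1)
  · intro k
    obtain ⟨z, hz, hzlt⟩ := hub k
    have h := csInf_le ⟨1 / (1 - s * L), fun y hy => hlb k y hy⟩ hz
    exact lt_of_le_of_lt (add_le_add_left h 1) (by linarith)
end

section
/- Let 0 < μ < L, s ∈ (0, 1/L), and let {t_k} satisfy the Nesterov rule. Then lim_{k→∞} D_k = D_∞ := (1 + μs)/(μs) + ((L - μ)s + Lμs² + sqrt( ((L-μ)s + Lμs²)² + 4(1 - Ls)μs )) / (2(1 - Ls)μs), and moreover D_∞ lies in the open interval ( 1/(μs(1 - sL)), (1 + μ/L)/(μs(1 - sL)) ). -/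
open Filter Finset
open scoped RealInnerProductSpace Topology

noncomputable def rhoAux (A a b : ℝ) : ℝ :=
  (a + A - b + Real.sqrt ((a + A - b) ^ 2 + 4 * A * b)) / (2 * b)

lemma rhoAux_pos (A a b : ℝ) (hA : 0 < A) (hb : 0 < b) : 0 < rhoAux A a b := by
  have h1 : |a + A - b| < Real.sqrt ((a + A - b) ^ 2 + 4 * A * b) := by
    rw [← Real.sqrt_sq_eq_abs]
    exact Real.sqrt_lt_sqrt (sq_nonneg _) (by nlinarith)
  have h2 := neg_abs_le (a + A - b)
  exact div_pos (by linarith) (by linarith)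

lemma rhoAux_root {A a b : ℝ} (hA : 0 < A) (hb : 0 < b) :
    a + A + A / rhoAux A a b = b + b * rhoAux A a b := by
  have hρ := rhoAux_pos A a b hA hb
  have hS : Real.sqrt ((a + A - b) ^ 2 + 4 * A * b) ^ 2 = (a + A - b) ^ 2 + 4 * A * b :=
    Real.sq_sqrt (by positivity)
  have h1 : Real.sqrt ((a + A - b) ^ 2 + 4 * A * b) = 2 * b * rhoAux A a b - (a + A - b) := by
    rw [rhoAux]
    field_simp
    ring
  rw [h1] at hS
  have hq : b * rhoAux A a b ^ 2 = (a + A - b) * rhoAux A a b + A := by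
    apply mul_left_cancel₀ (show (4 * b : ℝ) ≠ 0 by positivity)
    linear_combination hS
  field_simp
  linear_combination -hq

lemma rhoAux_tendsto {A a0 b0 : ℝ} {a b : ℕ → ℝ} (hb0 : b0 ≠ 0)
    (ha : Tendsto a atTop (𝓝 a0)) (hb : Tendsto b atTop (𝓝 b0)) :
    Tendsto (fun k => rhoAux A (a k) (b k)) atTop (𝓝 (rhoAux A a0 b0)) := by
  have h1 : Tendsto (fun k => a k + A - b k) atTop (𝓝 (a0 + A - b0)) :=
    (ha.add_const A).sub hb
  have h2 : Tendsto (fun k => Real.sqrt ((a k + A - b k) ^ 2 + 4 * A * b k)) atTop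
      (𝓝 (Real.sqrt ((a0 + A - b0) ^ 2 + 4 * A * b0))) :=
    ((h1.pow 2).add (hb.const_mul (4 * A))).sqrt
  exact (h1.add h2).div (hb.const_mul 2) (by simpa using hb0)

lemma sqrt_tendsto_atTop {f : ℕ → ℝ} (hf : Tendsto f atTop atTop) :
    Tendsto (fun k => Real.sqrt (f k)) atTop atTop := by
  apply Filter.tendsto_atTop.2
  intro c
  filter_upwards [hf.eventually_ge_atTop (c ^ 2)] with k h1
  calc c ≤ |c| := le_abs_self c
  _ = Real.sqrt (c ^ 2) := (Real.sqrt_sq_eq_abs c).symm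
  _ ≤ Real.sqrt (f k) := Real.sqrt_le_sqrt h1

set_option maxHeartbeats 4000000 in
theorem Dseq_limit (μ L s : ℝ) (hμ : 0 < μ) (hμL : μ < L)
    (hs0 : 0 < s) (hs1 : s < 1 / L)
    (t : ℕ → ℝ) (ht1 : t 1 = 1) (htmono : ∀ k, 1 ≤ k → t k < t (k + 1))
    (htlim : Tendsto t atTop atTop)
    (htrec : ∀ k, 1 ≤ k → t (k + 1) ^ 2 - t (k + 1) ≤ t k ^ 2)
    :
    Tendsto (fun k => Dseq μ L s t k) atTop
      (𝓝 ((1 + μ * s) / (μ * s) +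
        ((L - μ) * s + L * μ * s ^ 2 +
          Real.sqrt (((L - μ) * s + L * μ * s ^ 2) ^ 2 + 4 * (1 - L * s) * μ * s)) /
          (2 * (1 - L * s) * μ * s))) ∧
    ((1 + μ * s) / (μ * s) +
        ((L - μ) * s + L * μ * s ^ 2 +
          Real.sqrt (((L - μ) * s + L * μ * s ^ 2) ^ 2 + 4 * (1 - L * s) * μ * s)) /
          (2 * (1 - L * s) * μ * s)) ∈
      Set.Ioo (1 / (μ * s * (1 - s * L))) ((1 + μ / L) / (μ * s * (1 - s * L))) := by
  -- basic positivity facts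
  have hL : 0 < L := hμ.trans hμL
  have hsL : s * L < 1 := (lt_div_iff₀ hL).1 hs1
  have hA1 : 0 < 1 - s * L := by linarith
  have hLs : 0 < 1 - L * s := by nlinarith [mul_comm s L]
  have hms : 0 < μ * s := mul_pos hμ hs0
  have hc0 : 0 < 1 / (s * μ) - 2 + L * s := by
    have h : 1 / (s * μ) - 2 + L * s = (1 - 2 * (s * μ) + L * μ * s ^ 2) / (s * μ) := by
      field_simp
    rw [h]
    apply div_pos _ (by positivity)
    nlinarith [sq_nonneg (1 - s * μ), mul_pos (mul_pos (sub_pos.2 hμL) hμ) (pow_pos hs0 2)]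
  -- abbreviations
  obtain ⟨A, hAdef⟩ : ∃ x : ℝ, x = 1 / (1 - s * L) := ⟨_, rfl⟩
  obtain ⟨B, hBdef⟩ : ∃ x : ℝ, x = 1 / (μ * s) := ⟨_, rfl⟩
  obtain ⟨C, hCdef⟩ : ∃ x : ℝ, x = (1 / (s * μ) - 2 + L * s) / (1 - s * L) := ⟨_, rfl⟩
  obtain ⟨a, hadef⟩ : ∃ f : ℕ → ℝ, f = fun k : ℕ =>
      (t (k + 2) - 1) * t (k + 2) / (t (k + 1) ^ 2 * (1 - s * L)) *
        (1 / (s * μ) - 2 + L * s) := ⟨_, rfl⟩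
  obtain ⟨b, hbdef⟩ : ∃ f : ℕ → ℝ, f = fun k : ℕ =>
      (t (k + 1) - 1) / (μ * s * t (k + 1)) := ⟨_, rfl⟩
  have hApos : 0 < A := by rw [hAdef]; positivity
  have hBpos : 0 < B := by rw [hBdef]; positivity
  have hCpos : 0 < C := by rw [hCdef]; exact div_pos hc0 hA1
  -- facts about t
  have htge : ∀ k, 1 ≤ k → 1 ≤ t k := by
    intro k hk
    induction k, hk using Nat.le_induction with
    | base => exact ht1.ge
    | succ n hn ih => exact ih.trans (htmono n hn).le
  have ht1' : ∀ k : ℕ, 1 ≤ t (k + 1) := fun k => htge (k + 1) (Nat.le_add_left 1 k)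
  have htpos : ∀ k : ℕ, 0 < t (k + 1) := fun k => lt_of_lt_of_le one_pos (ht1' k)
  have htlt : ∀ k : ℕ, t (k + 1) < t (k + 2) := fun k => htmono (k + 1) (Nat.le_add_left 1 k)
  have htgt1 : ∀ k, 1 ≤ k → 1 < t (k + 1) := fun k hk =>
    lt_of_le_of_lt (htge k hk) (htmono k hk)
  -- limits of the coefficient sequences
  have htt : Tendsto (fun k : ℕ => t (k + 1)) atTop atTop :=
    htlim.comp (tendsto_add_atTop_nat 1)
  have htinv : Tendsto (fun k : ℕ => 1 / t (k + 1)) atTop (𝓝 0) := by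
    simpa only [Pi.inv_apply, Pi.inv_def, Pi.div_def, Pi.one_apply, ← one_div] using htt.inv_tendsto_atTop
  have hone : Tendsto (fun k : ℕ => 1 - 1 / t (k + 1)) atTop (𝓝 1) := by
    simpa using tendsto_const_nhds.sub htinv
  have hb_lim : Tendsto b atTop (𝓝 B) := by
    have heq : ∀ k : ℕ, (1 - 1 / t (k + 1)) * (1 / (μ * s)) = b k := by
      intro k
      have h := (htpos k).ne'
      rw [hbdef]
      field_simp
    have h := hone.mul_const (1 / (μ * s))
    rw [one_mul] at h
    rw [hBdef]
    exact h.congr heq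
  have hr_lim : Tendsto (fun k : ℕ => (t (k + 2) - 1) * t (k + 2) / t (k + 1) ^ 2)
      atTop (𝓝 1) := by
    have hup : ∀ k : ℕ, (t (k + 2) - 1) * t (k + 2) / t (k + 1) ^ 2 ≤ 1 := by
      intro k
      rw [div_le_one (pow_pos (htpos k) 2)]
      have h := htrec (k + 1) (Nat.le_add_left 1 k)
      nlinarith [h]
    have hlo : ∀ k : ℕ, 1 - 1 / t (k + 1) ≤ (t (k + 2) - 1) * t (k + 2) / t (k + 1) ^ 2 := by
      intro k
      have h1 := ht1' k
      have h2 := htlt k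
      have hp := htpos k
      have he : 1 - 1 / t (k + 1) = (t (k + 1) - 1) / t (k + 1) := by field_simp
      rw [he, div_le_div_iff₀ hp (pow_pos hp 2)]
      nlinarith [mul_nonneg (sub_nonneg.2 h2.le)
        (show (0:ℝ) ≤ t (k + 2) + t (k + 1) - 1 by nlinarith)]
    exact tendsto_of_tendsto_of_tendsto_of_le_of_le hone tendsto_const_nhds hlo hup
  have ha_lim : Tendsto a atTop (𝓝 C) := by
    have heq : ∀ k : ℕ, ((t (k + 2) - 1) * t (k + 2) / t (k + 1) ^ 2) *
        ((1 / (s * μ) - 2 + L * s) / (1 - s * L)) = a k := by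
      intro k
      rw [hadef]
      simp only [div_eq_mul_inv, mul_inv]
      ring
    have h := hr_lim.mul_const ((1 / (s * μ) - 2 + L * s) / (1 - s * L))
    rw [one_mul] at h
    rw [hCdef]
    exact h.congr heq
  have he_lim : Tendsto (fun k : ℕ => 1 / (μ * s * t (k + 1))) atTop (𝓝 0) := by
    simpa only [Pi.inv_apply, Pi.inv_def, Pi.div_def, Pi.one_apply, ← one_div] using (htt.const_mul_atTop hms).inv_tendsto_atTop
  have hbpos : ∀ k, 1 ≤ k → 0 < b k := by
    intro k hk
    rw [hbdef]
    exact div_pos (by linarith [htgt1 k hk]) (mul_pos hms (htpos k))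
  -- the limiting quadratic root
  obtain ⟨vst, hvstdef⟩ : ∃ x : ℝ, x = rhoAux A C B := ⟨_, rfl⟩
  have hvstpos : 0 < vst := hvstdef ▸ rhoAux_pos A C B hApos hBpos
  have hroot : C + A + A / vst = B + B * vst := hvstdef ▸ rhoAux_root hApos hBpos
  obtain ⟨M, hMdef⟩ : ∃ x : ℝ, x = B * (1 + vst) := ⟨_, rfl⟩
  have hMpos : 0 < M := by rw [hMdef]; exact mul_pos hBpos (by linarith)
  have hM_lim : Tendsto (fun k => b k * (1 + rhoAux A (a k) (b k))) atTop (𝓝 M) := by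
    rw [hMdef, hvstdef]
    exact hb_lim.mul (tendsto_const_nhds.add (rhoAux_tendsto hBpos.ne' ha_lim hb_lim))
  -- lower bound
  have hlb : ∀ k, 1 ≤ k → b k * (1 + rhoAux A (a k) (b k)) + 1 ≤ Dseq μ L s t k := by
    intro k hk
    have hbk := hbpos k hk
    have hρk : 0 < rhoAux A (a k) (b k) := rhoAux_pos A (a k) (b k) hApos hbk
    have hrootk : a k + A + A / rhoAux A (a k) (b k)
        = b k + b k * rhoAux A (a k) (b k) := rhoAux_root hApos hbk
    unfold Dseq
    apply add_le_add_left
    apply le_csInf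
    · exact ⟨_, 1, 1, 1, one_pos, one_pos, one_pos, rfl⟩
    · rintro z ⟨u, v, w, hu, hv, hw, rfl⟩
      rcases le_total v (rhoAux A (a k) (b k)) with hvρ | hvρ
      · have h1 : A / rhoAux A (a k) (b k) ≤ A / v := by gcongr
        have e1 : (t (k + 2) - 1) * t (k + 2) / (t (k + 1) ^ 2 * (1 - s * L)) *
            (1 / (s * μ) - 2 + L * s) = a k := by simp only [hadef]
        have e2 : (1 + u + 1 / v) / (1 - s * L) = (1 + u + 1 / v) * A := by
          rw [hAdef, mul_one_div]
        have h2 : b k * (1 + rhoAux A (a k) (b k)) ≤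
            (t (k + 2) - 1) * t (k + 2) / (t (k + 1) ^ 2 * (1 - s * L)) *
              (1 / (s * μ) - 2 + L * s) + (1 + u + 1 / v) / (1 - s * L) := by
          rw [e1, e2]
          have h3 : A / v = A * (1 / v) := by rw [mul_one_div]
          nlinarith [hrootk, h1, mul_pos hApos hu, h3]
        exact le_trans h2 (le_trans (le_max_left _ _) (le_max_left _ _))
      · have h2 : b k * (1 + rhoAux A (a k) (b k)) ≤
            (1 + v + w) * (t (k + 1) - 1) / (μ * s * t (k + 1)) := by
          have e1 : (1 + v + w) * (t (k + 1) - 1) / (μ * s * t (k + 1))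
              = (1 + v + w) * b k := by
            simp only [hbdef]
            rw [mul_div_assoc]
          rw [e1]
          nlinarith [mul_pos hbk hw, mul_nonneg hbk.le (sub_nonneg.2 hvρ)]
        exact le_trans h2 (le_trans (le_max_right _ _) (le_max_left _ _))
  -- test point for the upper bound
  obtain ⟨uu, huudef⟩ : ∃ f : ℕ → ℝ, f = fun k : ℕ => 1 / Real.sqrt (t (k + 1)) := ⟨_, rfl⟩
  have huupos : ∀ k : ℕ, 0 < uu k := by
    intro k
    rw [huudef]
    exact div_pos one_pos (Real.sqrt_pos.2 (htpos k))
  have hub : ∀ k : ℕ, Dseq μ L s t k ≤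
      max (max ((t (k + 2) - 1) * t (k + 2) / (t (k + 1) ^ 2 * (1 - s * L)) *
          (1 / (s * μ) - 2 + L * s) + (1 + uu k + 1 / vst) / (1 - s * L))
        ((1 + vst + uu k) * (t (k + 1) - 1) / (μ * s * t (k + 1))))
        ((1 + 1 / uu k + 1 / uu k) / (μ * s * t (k + 1))) + 1 := by
    intro k
    unfold Dseq
    apply add_le_add_left
    apply csInf_le
    · refine ⟨0, ?_⟩
      rintro z ⟨u, v, w, hu, hv, hw, rfl⟩
      have h3 : 0 ≤ (1 + 1 / w + 1 / u) / (μ * s * t (k + 1)) := by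
        apply div_nonneg _ (mul_pos hms (htpos k)).le
        have := one_div_pos.2 hu
        have := one_div_pos.2 hw
        linarith
      exact le_trans h3 (le_max_right _ _)
    · exact ⟨uu k, vst, uu k, huupos k, hvstpos, huupos k, rfl⟩
  -- limit of the upper bound
  have huu0 : Tendsto uu atTop (𝓝 0) := by
    rw [huudef]
    simpa only [Pi.inv_apply, Pi.inv_def, Pi.div_def, Pi.one_apply, ← one_div] using (sqrt_tendsto_atTop htt).inv_tendsto_atTop
  have hcomp1 : Tendsto (fun k : ℕ =>
      (t (k + 2) - 1) * t (k + 2) / (t (k + 1) ^ 2 * (1 - s * L)) *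
        (1 / (s * μ) - 2 + L * s) + (1 + uu k + 1 / vst) / (1 - s * L)) atTop
      (𝓝 (C + (1 + 0 + 1 / vst) / (1 - s * L))) := by
    have h := ha_lim.add
      (((tendsto_const_nhds (x := (1:ℝ)) (f := atTop)).add huu0).add
          (tendsto_const_nhds (x := 1 / vst)) |>.div_const (1 - s * L))
    simp only [hadef] at h
    exact h
  have hcomp2 : Tendsto (fun k : ℕ =>
      (1 + vst + uu k) * (t (k + 1) - 1) / (μ * s * t (k + 1))) atTop
      (𝓝 ((1 + vst + 0) * B)) := by
    have h := ((tendsto_const_nhds (x := 1 + vst) (f := atTop)).add huu0).mul hb_lim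
    simp only [hbdef, ← mul_div_assoc] at h
    exact h
  have hcomp3 : Tendsto (fun k : ℕ =>
      (1 + 1 / uu k + 1 / uu k) / (μ * s * t (k + 1))) atTop (𝓝 0) := by
    have heq3 : ∀ k : ℕ, 1 / (μ * s * t (k + 1)) +
        2 * (1 / (μ * s * Real.sqrt (t (k + 1))))
        = (1 + 1 / uu k + 1 / uu k) / (μ * s * t (k + 1)) := by
      intro k
      have hp := htpos k
      have hsq : Real.sqrt (t (k + 1)) * Real.sqrt (t (k + 1)) = t (k + 1) :=
        Real.mul_self_sqrt hp.le
      have hsp : 0 < Real.sqrt (t (k + 1)) := Real.sqrt_pos.2 hp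
      rw [huudef]
      simp only [one_div_one_div]
      field_simp
      linear_combination (-2) * hsq
    have h2s : Tendsto (fun k : ℕ => 2 * (1 / (μ * s * Real.sqrt (t (k + 1))))) atTop
        (𝓝 0) := by
      have h := ((sqrt_tendsto_atTop htt).const_mul_atTop hms).inv_tendsto_atTop
      simpa only [Pi.inv_apply, Pi.inv_def, Pi.div_def, Pi.one_apply, ← one_div, mul_zero] using h.const_mul 2
    have h := he_lim.add h2s
    rw [add_zero] at h
    exact h.congr heq3
  have hval : max (max (C + (1 + 0 + 1 / vst) / (1 - s * L)) ((1 + vst + 0) * B)) 0 = M := by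
    have e2 : (1 + 0 + 1 / vst) / (1 - s * L) = A + A / vst := by
      rw [hAdef]
      field_simp
      ring
    have e1 : C + (1 + 0 + 1 / vst) / (1 - s * L) = M := by
      rw [e2, hMdef]
      linarith [hroot]
    have e3 : (1 + vst + 0) * B = M := by rw [hMdef]; ring
    rw [e1, e3, max_self, max_eq_left hMpos.le]
  have hmax_lim : Tendsto (fun k : ℕ =>
      max (max ((t (k + 2) - 1) * t (k + 2) / (t (k + 1) ^ 2 * (1 - s * L)) *
          (1 / (s * μ) - 2 + L * s) + (1 + uu k + 1 / vst) / (1 - s * L))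
        ((1 + vst + uu k) * (t (k + 1) - 1) / (μ * s * t (k + 1))))
        ((1 + 1 / uu k + 1 / uu k) / (μ * s * t (k + 1)))) atTop (𝓝 M) := by
    rw [← hval]
    exact (hcomp1.max hcomp2).max hcomp3
  have hDlim : Tendsto (fun k => Dseq μ L s t k) atTop (𝓝 (M + 1)) := by
    apply tendsto_of_tendsto_of_tendsto_of_le_of_le'
      (hM_lim.add (tendsto_const_nhds (x := (1:ℝ))))
      (hmax_lim.add (tendsto_const_nhds (x := (1:ℝ))))
    · exact eventually_atTop.2 ⟨1, hlb⟩
    · exact Eventually.of_forall hub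
  -- identify the limit with the closed form
  have hdpos : 0 < (1 - L * s) * μ * s := mul_pos (mul_pos hLs hμ) hs0
  have hQpos : 0 < 4 * (1 - L * s) * μ * s := by nlinarith [hdpos]
  have hPQnn : 0 ≤ ((L - μ) * s + L * μ * s ^ 2) ^ 2 + 4 * (1 - L * s) * μ * s := by
    nlinarith [sq_nonneg ((L - μ) * s + L * μ * s ^ 2)]
  have hMeq : M + 1 = (1 + μ * s) / (μ * s) +
      ((L - μ) * s + L * μ * s ^ 2 +
        Real.sqrt (((L - μ) * s + L * μ * s ^ 2) ^ 2 + 4 * (1 - L * s) * μ * s)) /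
        (2 * (1 - L * s) * μ * s) := by
    have hinner : (C + A - B) ^ 2 + 4 * A * B
        = (((L - μ) * s + L * μ * s ^ 2) ^ 2 + 4 * (1 - L * s) * μ * s) /
          ((1 - L * s) * μ * s) ^ 2 := by
      rw [hAdef, hBdef, hCdef]
      field_simp
      ring
    have hsq : Real.sqrt ((C + A - B) ^ 2 + 4 * A * B)
        = Real.sqrt (((L - μ) * s + L * μ * s ^ 2) ^ 2 + 4 * (1 - L * s) * μ * s) /
          ((1 - L * s) * μ * s) := by
      rw [hinner, Real.sqrt_div hPQnn, Real.sqrt_sq hdpos.le]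
    rw [hMdef, hvstdef, rhoAux, hsq, hAdef, hBdef, hCdef]
    field_simp
    ring
  constructor
  · rw [← hMeq]
    exact hDlim
  · -- interval membership
    rw [← hMeq]
    have hPpos : 0 < (L - μ) * s + L * μ * s ^ 2 := by
      nlinarith [mul_pos (sub_pos.2 hμL) hs0, mul_pos (mul_pos hL hμ) (pow_pos hs0 2)]
    have hR1 : (L - μ) * s + L * μ * s ^ 2 <
        Real.sqrt (((L - μ) * s + L * μ * s ^ 2) ^ 2 + 4 * (1 - L * s) * μ * s) := by
      rw [Real.lt_sqrt hPpos.le]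
      nlinarith [hQpos]
    have hR2 : Real.sqrt (((L - μ) * s + L * μ * s ^ 2) ^ 2 + 4 * (1 - L * s) * μ * s) <
        (L - μ) * s + L * μ * s ^ 2 + 2 * (μ / L) := by
      rw [Real.sqrt_lt' (by positivity)]
      have key : (((L - μ) * s + L * μ * s ^ 2) ^ 2 + 4 * (1 - L * s) * μ * s) * L ^ 2
          < (((L - μ) * s + L * μ * s ^ 2) * L + 2 * μ) ^ 2 := by
        nlinarith [mul_pos hμ (mul_pos hμ hLs),
          mul_pos (mul_pos hμ (mul_pos hL hL))
            (mul_pos (mul_pos hs0 hs0) (add_pos hL hμ))]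
      have he : ((L - μ) * s + L * μ * s ^ 2 + 2 * (μ / L)) ^ 2
          = (((L - μ) * s + L * μ * s ^ 2) * L + 2 * μ) ^ 2 / L ^ 2 := by
        field_simp
      rw [he, lt_div_iff₀ (by positivity)]
      exact key
    have h2d : 0 < 2 * (1 - L * s) * μ * s := by nlinarith [hdpos]
    obtain ⟨R, hRdef⟩ : ∃ x : ℝ, x =
        Real.sqrt (((L - μ) * s + L * μ * s ^ 2) ^ 2 + 4 * (1 - L * s) * μ * s) := ⟨_, rfl⟩
    rw [← hRdef] at hR1 hR2
    have hMeqR : M + 1 = (1 + μ * s) / (μ * s) +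
        ((L - μ) * s + L * μ * s ^ 2 + R) / (2 * (1 - L * s) * μ * s) := by
      rw [hRdef]; exact hMeq
    rw [Set.mem_Ioo]
    constructor
    · have elow : (1 + μ * s) / (μ * s) +
          ((L - μ) * s + L * μ * s ^ 2 + R) / (2 * (1 - L * s) * μ * s) -
          1 / (μ * s * (1 - s * L))
          = (R - ((L - μ) * s + L * μ * s ^ 2)) / (2 * (1 - L * s) * μ * s) := by
        field_simp
        ring
      have hpos := div_pos (sub_pos.2 hR1) h2d
      linarith [elow, hMeqR]
    · have eupp : (1 + μ / L) / (μ * s * (1 - s * L)) -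
          ((1 + μ * s) / (μ * s) +
            ((L - μ) * s + L * μ * s ^ 2 + R) / (2 * (1 - L * s) * μ * s))
          = ((L - μ) * s + L * μ * s ^ 2 + 2 * (μ / L) - R) / (2 * (1 - L * s) * μ * s) := by
        field_simp
        ring
      have hpos := div_pos (sub_pos.2 hR2) h2d
      linarith [eupp, hMeqR]
end
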